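/- arXiv:2506.23483 — 12 statements merged into one kernel-verified Lean document; each statement's English description precedes it below -/
import Mathlib

section
/- Ball confinement and residual summability for the noisy IRMGL iteration: Let (u_k) be the IRMGL iterates with data v^δ started at u₀ with ‖u₀ − u†‖ ≤ ℘. Assume C > 0 and that ‖Au_k − v^δ‖ > τδ for all 0 ≤ k < n. Then ‖u_k − u†‖ ≤ ℘ for all 0 ≤ k ≤ n, and Σ_{k=0}^{n−1} ‖Au_k − v^δ‖² ≤ (1/(2C))·‖u₀ − u†‖². -/
open scoped BigOperators RealInnerProductSpace Classical
open ContinuousLinearMap Filter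

noncomputable section

/-- Weight matrix induced by a signal `x` on the image graph. -/
def wMat {n : ℕ} (g : Fin n → Fin n → ℝ) (σ : ℝ) (x : EuclideanSpace ℝ (Fin n)) :
    Matrix (Fin n) (Fin n) ℝ :=
  Matrix.of fun a b => g a b * Real.exp (-(x a - x b) ^ 2 / σ)

/-- Degree function of the graph induced by `x`. -/
def degFun {n : ℕ} (g : Fin n → Fin n → ℝ) (σ : ℝ) (x : EuclideanSpace ℝ (Fin n))
    (a : Fin n) : ℝ :=
  ∑ b, wMat g σ x a b

/-- Graph Laplacian matrix `Δ_x = D_x − W_x`. -/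
def lapMat {n : ℕ} (g : Fin n → Fin n → ℝ) (σ : ℝ) (x : EuclideanSpace ℝ (Fin n)) :
    Matrix (Fin n) (Fin n) ℝ :=
  Matrix.diagonal (degFun g σ x) - wMat g σ x

/-- Graph Laplacian as a continuous linear map on Euclidean space. -/
def lapCLM {n : ℕ} (g : Fin n → Fin n → ℝ) (σ : ℝ) (x : EuclideanSpace ℝ (Fin n)) :
    EuclideanSpace ℝ (Fin n) →L[ℝ] EuclideanSpace ℝ (Fin n) :=
  LinearMap.toContinuousLinearMap (Matrix.toEuclideanLin (lapMat g σ x))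

/-- Adaptive step size `α_w(u)`. -/
def alphaStep {n m : ℕ} (A : EuclideanSpace ℝ (Fin n) →L[ℝ] EuclideanSpace ℝ (Fin m))
    (η₀ η₁ : ℝ) (w : EuclideanSpace ℝ (Fin m)) (u : EuclideanSpace ℝ (Fin n)) : ℝ :=
  if adjoint A (A u - w) ≠ 0 then
    min (η₀ * ‖A u - w‖ ^ 2 / ‖adjoint A (A u - w)‖ ^ 2) η₁
  else η₁

/-- Adaptive weight `β_w(u)`. -/
def betaStep {n m : ℕ} (g : Fin n → Fin n → ℝ) (σ : ℝ)
    (A : EuclideanSpace ℝ (Fin n) →L[ℝ] EuclideanSpace ℝ (Fin m))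
    (ν₀ ν₁ ν₂ : ℝ) (w : EuclideanSpace ℝ (Fin m)) (u : EuclideanSpace ℝ (Fin n)) : ℝ :=
  if lapCLM g σ u u ≠ 0 then
    min (min (ν₀ * ‖A u - w‖ ^ 2 / ‖lapCLM g σ u u‖) (ν₁ / ‖lapCLM g σ u u‖)) ν₂
  else 0

/-- One step of the IRMGL iteration with data `w`. -/
def irmglStep {n m : ℕ} (g : Fin n → Fin n → ℝ) (σ : ℝ)
    (A : EuclideanSpace ℝ (Fin n) →L[ℝ] EuclideanSpace ℝ (Fin m))
    (η₀ η₁ ν₀ ν₁ ν₂ : ℝ) (w : EuclideanSpace ℝ (Fin m))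
    (u : EuclideanSpace ℝ (Fin n)) : EuclideanSpace ℝ (Fin n) :=
  u - alphaStep A η₀ η₁ w u • adjoint A (A u - w)
    - betaStep g σ A ν₀ ν₁ ν₂ w u • lapCLM g σ u u

/-- The IRMGL iterates with data `w` started at `u₀`. -/
def irmglSeq {n m : ℕ} (g : Fin n → Fin n → ℝ) (σ : ℝ)
    (A : EuclideanSpace ℝ (Fin n) →L[ℝ] EuclideanSpace ℝ (Fin m))
    (η₀ η₁ ν₀ ν₁ ν₂ : ℝ) (w : EuclideanSpace ℝ (Fin m))
    (u₀ : EuclideanSpace ℝ (Fin n)) : ℕ → EuclideanSpace ℝ (Fin n)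
  | 0 => u₀
  | k + 1 => irmglStep g σ A η₀ η₁ ν₀ ν₁ ν₂ w
      (irmglSeq g σ A η₀ η₁ ν₀ ν₁ ν₂ w u₀ k)

end


open scoped BigOperators RealInnerProductSpace Classical
open ContinuousLinearMap Filter

set_option maxHeartbeats 2000000 in
private lemma abstract_descent {n : ℕ} (e a L : EuclideanSpace ℝ (Fin n))
    (α β η₀ η₁ ν₀ ν₁ τ p η δ C R s : ℝ)
    (hη₀ : 0 < η₀) (hη₁ : 0 < η₁) (hν₀ : 0 < ν₀) (hν₁ : 0 < ν₁)
    (hτ : 1 < τ) (hp : 0 < p) (hδ : 0 ≤ δ) (hR0 : 0 ≤ R)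
    (hip : ⟪e, a⟫ = R ^ 2 + s) (hs : |s| ≤ δ * R) (hr : τ * δ < R)
    (hα1 : η ≤ α) (hα0 : 0 ≤ α) (hα2 : α ≤ η₁) (hα3 : α * ‖a‖ ^ 2 ≤ η₀ * R ^ 2)
    (hβ0 : 0 ≤ β) (hβ1 : β * ‖L‖ ≤ ν₀ * R ^ 2) (hβ2 : β * ‖L‖ ≤ ν₁)
    (he : ‖e‖ ≤ p)
    (hCdef : C = η - η₁ / τ - ν₀ * (p + ν₁) - η₀ * η₁) :
    ‖e - (α • a + β • L)‖ ^ 2 + 2 * C * R ^ 2 ≤ ‖e‖ ^ 2 := by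
  have hτ0 : (0:ℝ) < τ := by linarith
  have hβL0 : 0 ≤ β * ‖L‖ := mul_nonneg hβ0 (norm_nonneg L)
  have hnorm : ‖e - (α • a + β • L)‖ ^ 2
      = ‖e‖ ^ 2 - 2 * ⟪e, α • a + β • L⟫ + ‖α • a + β • L‖ ^ 2 :=
    norm_sub_sq_real e _
  have hinner : ⟪e, α • a + β • L⟫ = α * ⟪e, a⟫ + β * ⟪e, L⟫ := by
    rw [inner_add_right, real_inner_smul_right, real_inner_smul_right]
  have hipl : |⟪e, L⟫| ≤ p * ‖L‖ :=
    le_trans (abs_real_inner_le_norm e L) (mul_le_mul_of_nonneg_right he (norm_nonneg L))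
  have htri : ‖α • a + β • L‖ ≤ α * ‖a‖ + β * ‖L‖ := by
    refine le_trans (norm_add_le _ _) ?_
    rw [norm_smul, norm_smul, Real.norm_eq_abs, Real.norm_eq_abs,
      abs_of_nonneg hα0, abs_of_nonneg hβ0]
  have hQ0 : ‖α • a + β • L‖ ^ 2 ≤ (α * ‖a‖ + β * ‖L‖) ^ 2 := by
    have := mul_self_le_mul_self (norm_nonneg _) htri
    nlinarith [this]
  have h4 : (α * ‖a‖) ^ 2 ≤ η₀ * η₁ * R ^ 2 := by
    nlinarith [mul_le_mul_of_nonneg_left hα3 hα0,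
      mul_nonneg (by linarith : (0:ℝ) ≤ η₁ - α) (by positivity : (0:ℝ) ≤ η₀ * R ^ 2)]
  have h5 : (β * ‖L‖) ^ 2 ≤ ν₀ * ν₁ * R ^ 2 := by
    nlinarith [mul_le_mul_of_nonneg_left hβ2 hβL0,
      mul_le_mul_of_nonneg_right hβ1 hν₁.le]
  have hQ : ‖α • a + β • L‖ ^ 2 ≤ 2 * (η₀ * η₁ * R ^ 2) + 2 * (ν₀ * ν₁ * R ^ 2) := by
    nlinarith [hQ0, h4, h5, sq_nonneg (α * ‖a‖ - β * ‖L‖)]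
  have hδR : η₁ * (δ * R) ≤ η₁ / τ * R ^ 2 := by
    have h1 : τ * (δ * R) ≤ R * R := by nlinarith [hr.le, hR0, hδ]
    rw [div_mul_eq_mul_div, le_div_iff₀ hτ0]
    nlinarith [hη₁.le]
  have h2a : -(η₁ * (δ * R)) ≤ α * s := by
    nlinarith [mul_nonneg hα0 (by linarith [(abs_le.mp hs).1] : (0:ℝ) ≤ s + δ * R),
      mul_nonneg (by linarith : (0:ℝ) ≤ η₁ - α) (mul_nonneg hδ hR0)]
  have h2 : -(η₁ / τ * R ^ 2) ≤ α * s := le_trans (by linarith) h2a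
  have h1' : η * R ^ 2 ≤ α * R ^ 2 := mul_le_mul_of_nonneg_right hα1 (sq_nonneg _)
  have h3 : -(p * (ν₀ * R ^ 2)) ≤ β * ⟪e, L⟫ := by
    nlinarith [mul_nonneg hβ0 (by linarith [(abs_le.mp hipl).1] : (0:ℝ) ≤ ⟪e, L⟫ + p * ‖L‖),
      mul_nonneg hp.le (by linarith : (0:ℝ) ≤ ν₀ * R ^ 2 - β * ‖L‖)]
  have hCR : 2 * C * R ^ 2 = 2 * (η * R ^ 2) - 2 * (η₁ / τ * R ^ 2)
      - 2 * (p * (ν₀ * R ^ 2)) - 2 * (ν₀ * ν₁ * R ^ 2) - 2 * (η₀ * η₁ * R ^ 2) := by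
    rw [hCdef]; ring
  rw [hnorm, hinner, hip, hCR]
  nlinarith [hQ, h2, h1', h3]

set_option maxHeartbeats 1000000 in
private lemma step_descent {n m : ℕ} (g : Fin n → Fin n → ℝ) (σ : ℝ)
    (A : EuclideanSpace ℝ (Fin n) →L[ℝ] EuclideanSpace ℝ (Fin m))
    (η₀ η₁ ν₀ ν₁ ν₂ τ p η δ C : ℝ)
    (hη₀ : 0 < η₀) (hη₁ : 0 < η₁) (hν₀ : 0 < ν₀) (hν₁ : 0 < ν₁) (hν₂ : 0 < ν₂)
    (hτ : 1 < τ) (hp : 0 < p) (hηpos : 0 < η)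
    (hηle : η ≤ min (η₀ / ‖A‖ ^ 2) η₁) (hδ : 0 ≤ δ)
    (udag : EuclideanSpace ℝ (Fin n)) (v vδ : EuclideanSpace ℝ (Fin m))
    (hsol : A udag = v) (hnoise : ‖vδ - v‖ ≤ δ)
    (hCdef : C = η - η₁ / τ - ν₀ * (p + ν₁) - η₀ * η₁)
    (u : EuclideanSpace ℝ (Fin n)) (hu : ‖u - udag‖ ≤ p)
    (hr : τ * δ < ‖A u - vδ‖) :
    ‖irmglStep g σ A η₀ η₁ ν₀ ν₁ ν₂ vδ u - udag‖ ^ 2 + 2 * C * ‖A u - vδ‖ ^ 2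
      ≤ ‖u - udag‖ ^ 2 := by
  have hstep : irmglStep g σ A η₀ η₁ ν₀ ν₁ ν₂ vδ u - udag
      = (u - udag) - (alphaStep A η₀ η₁ vδ u • ContinuousLinearMap.adjoint A (A u - vδ)
        + betaStep g σ A ν₀ ν₁ ν₂ vδ u • lapCLM g σ u u) := by
    unfold irmglStep; abel
  rw [hstep]
  set r : EuclideanSpace ℝ (Fin m) := A u - vδ with hrdef
  set a : EuclideanSpace ℝ (Fin n) := ContinuousLinearMap.adjoint A r with hadef
  set L : EuclideanSpace ℝ (Fin n) := lapCLM g σ u u with hLdef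
  set α : ℝ := alphaStep A η₀ η₁ vδ u with hαdef
  set β : ℝ := betaStep g σ A ν₀ ν₁ ν₂ vδ u with hβdef
  set e : EuclideanSpace ℝ (Fin n) := u - udag with hedef
  have hR0 : (0:ℝ) ≤ ‖r‖ := norm_nonneg r
  have hRpos : (0:ℝ) < ‖r‖ := lt_of_le_of_lt (by positivity) hr
  have hAe : A e = r + (vδ - v) := by
    rw [hedef, map_sub, hsol, hrdef]; abel
  have hip : ⟪e, a⟫ = ‖r‖ ^ 2 + ⟪r, vδ - v⟫ := by
    rw [real_inner_comm, hadef, ContinuousLinearMap.adjoint_inner_left, hAe,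
      inner_add_right, real_inner_self_eq_norm_sq]
  have hs_abs : |⟪r, vδ - v⟫| ≤ δ * ‖r‖ := by
    refine le_trans (abs_real_inner_le_norm r (vδ - v)) ?_
    rw [mul_comm]
    exact mul_le_mul_of_nonneg_right hnoise hR0
  have ha0 : a ≠ 0 := by
    intro h
    have h0 : (0:ℝ) = ‖r‖ ^ 2 + ⟪r, vδ - v⟫ := by rw [← hip, h, inner_zero_right]
    have hs2 : -(δ * ‖r‖) ≤ ⟪r, vδ - v⟫ := (abs_le.mp hs_abs).1
    nlinarith [hRpos, hr, mul_nonneg hδ (by linarith : (0:ℝ) ≤ τ - 1)]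
  have hapos : (0:ℝ) < ‖a‖ := norm_pos_iff.mpr ha0
  have hAnorm : ‖a‖ ≤ ‖A‖ * ‖r‖ := by
    calc ‖a‖ ≤ ‖ContinuousLinearMap.adjoint A‖ * ‖r‖ :=
          (ContinuousLinearMap.adjoint A).le_opNorm r
      _ = ‖A‖ * ‖r‖ := by rw [LinearIsometryEquiv.norm_map ContinuousLinearMap.adjoint A]
  have hα_eq : α = min (η₀ * ‖r‖ ^ 2 / ‖a‖ ^ 2) η₁ := by
    rw [hαdef, alphaStep, if_pos]; exact ha0
  have hα_le : α ≤ η₁ := by rw [hα_eq]; exact min_le_right _ _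
  have hα_sq : α * ‖a‖ ^ 2 ≤ η₀ * ‖r‖ ^ 2 := by
    have h1 : α ≤ η₀ * ‖r‖ ^ 2 / ‖a‖ ^ 2 := by rw [hα_eq]; exact min_le_left _ _
    have h2 : α * ‖a‖ ^ 2 ≤ (η₀ * ‖r‖ ^ 2 / ‖a‖ ^ 2) * ‖a‖ ^ 2 :=
      mul_le_mul_of_nonneg_right h1 (sq_nonneg _)
    rwa [div_mul_cancel₀ _ (pow_ne_zero 2 (ne_of_gt hapos))] at h2
  have hApos : (0:ℝ) < ‖A‖ := by
    nlinarith [lt_of_lt_of_le hapos hAnorm, hRpos, norm_nonneg A]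
  have hα_ge : η ≤ α := by
    rw [hα_eq]
    refine le_min ?_ (le_trans hηle (min_le_right _ _))
    refine le_trans (le_trans hηle (min_le_left _ _)) ?_
    rw [div_le_div_iff₀ (pow_pos hApos 2) (pow_pos hapos 2)]
    have hsq : ‖a‖ ^ 2 ≤ ‖A‖ ^ 2 * ‖r‖ ^ 2 := by
      nlinarith [hAnorm, norm_nonneg a, norm_nonneg A, norm_nonneg r]
    nlinarith [hη₀.le]
  have hα_nonneg : (0:ℝ) ≤ α := le_trans hηpos.le hα_ge
  have hβfacts : 0 ≤ β ∧ β * ‖L‖ ≤ ν₀ * ‖r‖ ^ 2 ∧ β * ‖L‖ ≤ ν₁ := by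
    by_cases hL : L = 0
    · have hβ0 : β = 0 := by
        rw [hβdef, betaStep, if_neg]; simpa using hL
      rw [hβ0, hL]
      simp only [zero_mul, le_refl, true_and, norm_zero, mul_zero]
      constructor <;> positivity
    · have hLpos : (0:ℝ) < ‖L‖ := norm_pos_iff.mpr hL
      have hβeq : β = min (min (ν₀ * ‖r‖ ^ 2 / ‖L‖) (ν₁ / ‖L‖)) ν₂ := by
        rw [hβdef, betaStep, if_pos hL]
      refine ⟨by rw [hβeq]; exact le_min (le_min (by positivity) (by positivity)) hν₂.le,
        ?_, ?_⟩
      · have h1 : β ≤ ν₀ * ‖r‖ ^ 2 / ‖L‖ := by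
          rw [hβeq]; exact (min_le_left _ _).trans (min_le_left _ _)
        calc β * ‖L‖ ≤ (ν₀ * ‖r‖ ^ 2 / ‖L‖) * ‖L‖ := mul_le_mul_of_nonneg_right h1 hLpos.le
          _ = ν₀ * ‖r‖ ^ 2 := div_mul_cancel₀ _ hLpos.ne'
      · have h1 : β ≤ ν₁ / ‖L‖ := by
          rw [hβeq]; exact (min_le_left _ _).trans (min_le_right _ _)
        calc β * ‖L‖ ≤ (ν₁ / ‖L‖) * ‖L‖ := mul_le_mul_of_nonneg_right h1 hLpos.le
          _ = ν₁ := div_mul_cancel₀ _ hLpos.ne'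
  obtain ⟨hβ0, hβ1, hβ2⟩ := hβfacts
  exact abstract_descent e a L α β η₀ η₁ ν₀ ν₁ τ p η δ C ‖r‖ ⟪r, vδ - v⟫
    hη₀ hη₁ hν₀ hν₁ hτ hp hδ hR0 hip hs_abs hr hα_ge hα_nonneg hα_le hα_sq
    hβ0 hβ1 hβ2 hu hCdef

set_option maxHeartbeats 1000000 in
/-- Ball confinement and residual summability for the noisy IRMGL iteration. -/
theorem stmt1 (n m : ℕ) (g : Fin n → Fin n → ℝ) (σ : ℝ) (hσ : 0 < σ)
    (hgsymm : ∀ a b, g a b = g b a) (hgnn : ∀ a b, 0 ≤ g a b) (hgdiag : ∀ a, g a a = 0)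
    (A : EuclideanSpace ℝ (Fin n) →L[ℝ] EuclideanSpace ℝ (Fin m))
    (η₀ η₁ ν₀ ν₁ ν₂ τ p η δ : ℝ)
    (hη₀ : 0 < η₀) (hη₁ : 0 < η₁) (hν₀ : 0 < ν₀) (hν₁ : 0 < ν₁) (hν₂ : 0 < ν₂)
    (hτ : 1 < τ) (hp : 0 < p) (hηpos : 0 < η)
    (hηle : η ≤ min (η₀ / ‖A‖ ^ 2) η₁) (hδ : 0 ≤ δ)
    (udag : EuclideanSpace ℝ (Fin n)) (v vδ : EuclideanSpace ℝ (Fin m))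
    (hsol : A udag = v) (hnoise : ‖vδ - v‖ ≤ δ)
    (C : ℝ) (hCdef : C = η - η₁ / τ - ν₀ * (p + ν₁) - η₀ * η₁) (hC : 0 < C)
    (u₀ : EuclideanSpace ℝ (Fin n)) (hu₀ : ‖u₀ - udag‖ ≤ p) (N : ℕ)
    (hres : ∀ k < N, τ * δ < ‖A (irmglSeq g σ A η₀ η₁ ν₀ ν₁ ν₂ vδ u₀ k) - vδ‖) :
    (∀ k ≤ N, ‖irmglSeq g σ A η₀ η₁ ν₀ ν₁ ν₂ vδ u₀ k - udag‖ ≤ p) ∧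
      ∑ k ∈ Finset.range N, ‖A (irmglSeq g σ A η₀ η₁ ν₀ ν₁ ν₂ vδ u₀ k) - vδ‖ ^ 2
        ≤ 1 / (2 * C) * ‖u₀ - udag‖ ^ 2 := by
  set F := irmglSeq g σ A η₀ η₁ ν₀ ν₁ ν₂ vδ u₀ with hF
  have h2C : (0:ℝ) < 2 * C := by linarith
  have hsumnn : ∀ k : ℕ, (0:ℝ) ≤ ∑ j ∈ Finset.range k, ‖A (F j) - vδ‖ ^ 2 := by
    intro k
    exact Finset.sum_nonneg fun i _ => by positivity
  have main : ∀ k, k ≤ N →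
      ‖F k - udag‖ ^ 2 + 2 * C * ∑ j ∈ Finset.range k, ‖A (F j) - vδ‖ ^ 2
        ≤ ‖u₀ - udag‖ ^ 2 := by
    intro k
    induction k with
    | zero =>
      intro _
      have hF0 : F 0 = u₀ := rfl
      simp [hF0]
    | succ k ih =>
      intro hk
      have ihk := ih (Nat.le_of_succ_le hk)
      have hX : ‖F k - udag‖ ^ 2 ≤ p ^ 2 := by
        nlinarith [ihk, mul_nonneg h2C.le (hsumnn k),
          mul_self_le_mul_self (norm_nonneg (u₀ - udag)) hu₀]
      have hball : ‖F k - udag‖ ≤ p := by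
        nlinarith [hX, norm_nonneg (F k - udag), hp]
      have hkN : k < N := hk
      have hstepineq := step_descent g σ A η₀ η₁ ν₀ ν₁ ν₂ τ p η δ C hη₀ hη₁ hν₀ hν₁ hν₂
        hτ hp hηpos hηle hδ udag v vδ hsol hnoise hCdef (F k) hball (hres k hkN)
      have hFsucc : F (k + 1) = irmglStep g σ A η₀ η₁ ν₀ ν₁ ν₂ vδ (F k) := rfl
      rw [Finset.sum_range_succ, hFsucc]
      nlinarith [hstepineq, ihk]
  constructor
  · intro k hk
    have hmk := main k hk
    have hX : ‖F k - udag‖ ^ 2 ≤ p ^ 2 := by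
      nlinarith [mul_nonneg h2C.le (hsumnn k),
        mul_self_le_mul_self (norm_nonneg (u₀ - udag)) hu₀]
    nlinarith [hX, norm_nonneg (F k - udag), hp]
  · have hmN := main N le_rfl
    have hkey : 2 * C * ∑ j ∈ Finset.range N, ‖A (F j) - vδ‖ ^ 2 ≤ ‖u₀ - udag‖ ^ 2 := by
      nlinarith [sq_nonneg ‖F N - udag‖]
    rw [one_div, inv_mul_eq_div, le_div_iff₀ h2C]
    nlinarith [hkey]
end

section
/- Finite termination of the discrepancy principle for IRMGL: Let (u_k) be the IRMGL iterates with data v^δ started at u₀ with ‖u₀ − u†‖ ≤ ℘, and assume C > 0 and δ > 0. If ‖Au_k − v^δ‖ > τδ for all 0 ≤ k ≤ n, then 2(n+1)·C·τ²·δ² ≤ ‖u₀ − u†‖². Consequently there exists a finite index k_δ such that ‖Au_{k_δ} − v^δ‖ ≤ τδ and ‖Au_k − v^δ‖ > τδ for all 0 ≤ k < k_δ. -/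
open scoped BigOperators RealInnerProductSpace Classical
open ContinuousLinearMap Filter

set_option maxHeartbeats 2000000 in
/-- Pure scalar arithmetic core of the one-step decrease estimate. -/
lemma irmgl_arith (η₀ η₁ ν₀ ν₁ τ p η δ C R S Ln α β ise iLe D E e2 : ℝ)
    (hη₀ : 0 < η₀) (hη₁ : 0 < η₁) (hν₀ : 0 < ν₀) (hν₁ : 0 < ν₁)
    (hτ : 1 < τ) (hp : 0 < p) (hδ : 0 < δ)
    (hCdef : C = η - η₁ / τ - ν₀ * (p + ν₁) - η₀ * η₁) (hC : 0 < C)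
    (hR : τ * δ < R)
    (hα1 : η ≤ α) (hα2 : α ≤ η₁) (hα0 : 0 < α) (hα3 : α * S ^ 2 ≤ η₀ * R ^ 2)
    (hβ0 : 0 ≤ β) (hβ1 : β * Ln ≤ ν₀ * R ^ 2) (hβ2 : β * Ln ≤ ν₁) (hLn : 0 ≤ Ln)
    (hise : R ^ 2 - R * δ ≤ ise) (hiLe : -(Ln * p) ≤ iLe)
    (hD : D ≤ 2 * (α * S) ^ 2 + 2 * (β * Ln) ^ 2)
    (hE : E = e2 - 2 * (α * ise + β * iLe) + D) :
    E + 2 * C * τ ^ 2 * δ ^ 2 ≤ e2 := by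
  have hτ0 : (0 : ℝ) < τ := by linarith
  have hτδ : 0 < τ * δ := mul_pos hτ0 hδ
  have hR0 : 0 < R := lt_trans hτδ hR
  have t1 : α * (R ^ 2 - R * δ) ≤ α * ise := mul_le_mul_of_nonneg_left hise hα0.le
  have t2 : β * (-(Ln * p)) ≤ β * iLe := mul_le_mul_of_nonneg_left hiLe hβ0
  have t3 : β * Ln * p ≤ ν₀ * R ^ 2 * p := mul_le_mul_of_nonneg_right hβ1 hp.le
  have hδR : δ * R ≤ R ^ 2 / τ := by
    rw [le_div_iff₀ hτ0]
    nlinarith [mul_le_mul_of_nonneg_right hR.le hR0.le]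
  have t4 : α * (R * δ) ≤ η₁ * (R ^ 2 / τ) := by
    have h1 : α * (R * δ) ≤ η₁ * (R * δ) :=
      mul_le_mul_of_nonneg_right hα2 (mul_nonneg hR0.le hδ.le)
    have h2 : η₁ * (R * δ) ≤ η₁ * (R ^ 2 / τ) := by
      apply mul_le_mul_of_nonneg_left _ hη₁.le
      linarith [hδR, mul_comm δ R]
    linarith
  have t5 : (α * S) ^ 2 ≤ η₁ * (η₀ * R ^ 2) := by
    have h1 : (α * S) ^ 2 = α * (α * S ^ 2) := by ring
    rw [h1]
    exact mul_le_mul hα2 hα3 (mul_nonneg hα0.le (sq_nonneg _)) hη₁.le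
  have t6 : (β * Ln) ^ 2 ≤ ν₁ * (ν₀ * R ^ 2) := by
    rw [sq]
    exact mul_le_mul hβ2 hβ1 (mul_nonneg hβ0 hLn) hν₁.le
  have t7 : η * R ^ 2 ≤ α * R ^ 2 := mul_le_mul_of_nonneg_right hα1 (sq_nonneg _)
  have hdivτ : η₁ / τ * R ^ 2 = η₁ * (R ^ 2 / τ) := by field_simp
  have key : 2 * C * R ^ 2 ≤ 2 * (α * ise + β * iLe) - D := by
    rw [hCdef]
    linarith [t1, t2, t3, t4, t5, t6, t7, hD, hdivτ]
  have h1 : τ ^ 2 * δ ^ 2 ≤ R ^ 2 := by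
    nlinarith [mul_le_mul hR.le hR.le hτδ.le hR0.le]
  have hfin : 2 * C * τ ^ 2 * δ ^ 2 ≤ 2 * C * R ^ 2 := by
    nlinarith [mul_nonneg hC.le (sub_nonneg.2 h1)]
  linarith

/-- Basic bounds for the weight `β`. -/
lemma beta_facts {n m : ℕ} (g : Fin n → Fin n → ℝ) (σ : ℝ)
    (A : EuclideanSpace ℝ (Fin n) →L[ℝ] EuclideanSpace ℝ (Fin m))
    (ν₀ ν₁ ν₂ : ℝ) (w : EuclideanSpace ℝ (Fin m)) (u : EuclideanSpace ℝ (Fin n))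
    (hν₀ : 0 < ν₀) (hν₁ : 0 < ν₁) (hν₂ : 0 < ν₂) :
    0 ≤ betaStep g σ A ν₀ ν₁ ν₂ w u ∧
      betaStep g σ A ν₀ ν₁ ν₂ w u * ‖lapCLM g σ u u‖ ≤ ν₀ * ‖A u - w‖ ^ 2 ∧
      betaStep g σ A ν₀ ν₁ ν₂ w u * ‖lapCLM g σ u u‖ ≤ ν₁ := by
  by_cases hL : lapCLM g σ u u = 0
  · rw [betaStep, if_neg (not_not.2 hL)]
    refine ⟨le_refl 0, ?_, ?_⟩ <;>
      simp [mul_nonneg hν₀.le (sq_nonneg _), hν₁.le]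
  · have hLn : 0 < ‖lapCLM g σ u u‖ := norm_pos_iff.2 hL
    rw [betaStep, if_pos hL]
    have h1 : 0 ≤ ν₀ * ‖A u - w‖ ^ 2 / ‖lapCLM g σ u u‖ :=
      div_nonneg (mul_nonneg hν₀.le (sq_nonneg _)) hLn.le
    have h2 : 0 ≤ ν₁ / ‖lapCLM g σ u u‖ := div_nonneg hν₁.le hLn.le
    refine ⟨le_min (le_min h1 h2) hν₂.le, ?_, ?_⟩
    · calc min (min (ν₀ * ‖A u - w‖ ^ 2 / ‖lapCLM g σ u u‖) (ν₁ / ‖lapCLM g σ u u‖)) ν₂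
            * ‖lapCLM g σ u u‖
          ≤ (ν₀ * ‖A u - w‖ ^ 2 / ‖lapCLM g σ u u‖) * ‖lapCLM g σ u u‖ :=
            mul_le_mul_of_nonneg_right ((min_le_left _ _).trans (min_le_left _ _)) hLn.le
      _ = ν₀ * ‖A u - w‖ ^ 2 := div_mul_cancel₀ _ hLn.ne'
    · calc min (min (ν₀ * ‖A u - w‖ ^ 2 / ‖lapCLM g σ u u‖) (ν₁ / ‖lapCLM g σ u u‖)) ν₂
            * ‖lapCLM g σ u u‖
          ≤ (ν₁ / ‖lapCLM g σ u u‖) * ‖lapCLM g σ u u‖ :=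
            mul_le_mul_of_nonneg_right ((min_le_left _ _).trans (min_le_right _ _)) hLn.le
      _ = ν₁ := div_mul_cancel₀ _ hLn.ne'

set_option maxHeartbeats 2000000 in
/-- One-step decrease of the error under the discrepancy condition. -/
lemma step_key {n m : ℕ} (g : Fin n → Fin n → ℝ) (σ : ℝ)
    (A : EuclideanSpace ℝ (Fin n) →L[ℝ] EuclideanSpace ℝ (Fin m))
    (η₀ η₁ ν₀ ν₁ ν₂ τ p η δ : ℝ)
    (hη₀ : 0 < η₀) (hη₁ : 0 < η₁) (hν₀ : 0 < ν₀) (hν₁ : 0 < ν₁) (hν₂ : 0 < ν₂)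
    (hτ : 1 < τ) (hp : 0 < p) (hηpos : 0 < η)
    (hηle : η ≤ min (η₀ / ‖A‖ ^ 2) η₁) (hδ : 0 < δ)
    (udag : EuclideanSpace ℝ (Fin n)) (v vδ : EuclideanSpace ℝ (Fin m))
    (hsol : A udag = v) (hnoise : ‖vδ - v‖ ≤ δ)
    (C : ℝ) (hCdef : C = η - η₁ / τ - ν₀ * (p + ν₁) - η₀ * η₁) (hC : 0 < C)
    (u : EuclideanSpace ℝ (Fin n)) (he : ‖u - udag‖ ≤ p)
    (hres : τ * δ < ‖A u - vδ‖) :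
    ‖irmglStep g σ A η₀ η₁ ν₀ ν₁ ν₂ vδ u - udag‖ ^ 2
      + 2 * C * τ ^ 2 * δ ^ 2 ≤ ‖u - udag‖ ^ 2 := by
  set r := A u - vδ with hr
  set s := adjoint A r with hs
  set L := lapCLM g σ u u with hLdef
  set e := u - udag with hedef
  set α := alphaStep A η₀ η₁ vδ u with hα
  set β := betaStep g σ A ν₀ ν₁ ν₂ vδ u with hβ
  obtain ⟨hβ0, hβ1, hβ2⟩ := beta_facts g σ A ν₀ ν₁ ν₂ vδ u hν₀ hν₁ hν₂
  have hτδ : 0 < τ * δ := mul_pos (by linarith) hδ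
  have hR0 : 0 < ‖r‖ := lt_trans hτδ hres
  -- inner product identity
  have hAe : A e = r + (vδ - v) := by
    simp only [hedef, map_sub, hsol, hr]; abel
  have hse : ⟪s, e⟫ = ‖r‖ ^ 2 + ⟪r, vδ - v⟫ := by
    rw [hs, adjoint_inner_left, hAe, inner_add_right, real_inner_self_eq_norm_sq]
  have hcs : |⟪r, vδ - v⟫| ≤ ‖r‖ * δ := by
    calc |⟪r, vδ - v⟫| ≤ ‖r‖ * ‖vδ - v‖ := abs_real_inner_le_norm r _
    _ ≤ ‖r‖ * δ := mul_le_mul_of_nonneg_left hnoise (norm_nonneg r)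
  have hse' : ‖r‖ ^ 2 - ‖r‖ * δ ≤ ⟪s, e⟫ := by
    rw [hse]; have := abs_le.1 hcs; linarith [this.1]
  have hsne : s ≠ 0 := by
    intro h0
    rw [h0, inner_zero_left] at hse'
    have hδR : δ < ‖r‖ := lt_of_le_of_lt (by nlinarith) hres
    nlinarith [mul_pos hR0 (sub_pos.2 hδR)]
  -- α bounds
  have hAnorm : 0 < ‖A‖ := by
    by_contra h
    push_neg at h
    have h0 : ‖A‖ = 0 := le_antisymm h (norm_nonneg _)
    rw [h0] at hηle
    simp at hηle
    linarith [hηle.1]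
  have hsle : ‖s‖ ≤ ‖A‖ * ‖r‖ := by
    calc ‖s‖ ≤ ‖adjoint A‖ * ‖r‖ := (adjoint A).le_opNorm r
    _ = ‖A‖ * ‖r‖ := by rw [adjoint.norm_map]
  have hSpos : 0 < ‖s‖ := norm_pos_iff.2 hsne
  have hαval : α = min (η₀ * ‖r‖ ^ 2 / ‖s‖ ^ 2) η₁ := by
    rw [hα, alphaStep, if_pos]; exact hsne
  have hα2 : α ≤ η₁ := by rw [hαval]; exact min_le_right _ _
  have hα1 : η ≤ α := by
    rw [hαval]
    refine le_min ?_ (hηle.trans (min_le_right _ _))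
    calc η ≤ η₀ / ‖A‖ ^ 2 := hηle.trans (min_le_left _ _)
    _ ≤ η₀ * ‖r‖ ^ 2 / ‖s‖ ^ 2 := by
        rw [div_le_div_iff₀ (pow_pos hAnorm 2) (pow_pos hSpos 2)]
        have h2 : ‖s‖ ^ 2 ≤ (‖A‖ * ‖r‖) ^ 2 := pow_le_pow_left₀ (norm_nonneg s) hsle 2
        nlinarith [h2, hη₀.le]
  have hα0 : 0 < α := lt_of_lt_of_le hηpos hα1
  have hα3 : α * ‖s‖ ^ 2 ≤ η₀ * ‖r‖ ^ 2 := by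
    rw [hαval]
    calc min (η₀ * ‖r‖ ^ 2 / ‖s‖ ^ 2) η₁ * ‖s‖ ^ 2
        ≤ (η₀ * ‖r‖ ^ 2 / ‖s‖ ^ 2) * ‖s‖ ^ 2 :=
          mul_le_mul_of_nonneg_right (min_le_left _ _) (sq_nonneg _)
    _ = η₀ * ‖r‖ ^ 2 := div_mul_cancel₀ _ (pow_pos hSpos 2).ne'
  -- expansion of the step
  have hexp : irmglStep g σ A η₀ η₁ ν₀ ν₁ ν₂ vδ u - udag = e - (α • s + β • L) := by
    rw [irmglStep, hedef, hα, hβ, hs, hr, hLdef]; abel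
  have hinner : ⟪e, α • s + β • L⟫ = α * ⟪s, e⟫ + β * ⟪L, e⟫ := by
    rw [real_inner_comm, inner_add_left, real_inner_smul_left, real_inner_smul_left]
  have hEeq : ‖irmglStep g σ A η₀ η₁ ν₀ ν₁ ν₂ vδ u - udag‖ ^ 2 =
      ‖e‖ ^ 2 - 2 * (α * ⟪s, e⟫ + β * ⟪L, e⟫) + ‖α • s + β • L‖ ^ 2 := by
    rw [hexp, norm_sub_sq_real, hinner]
  have hd : ‖α • s + β • L‖ ^ 2 ≤ 2 * (α * ‖s‖) ^ 2 + 2 * (β * ‖L‖) ^ 2 := by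
    have h1 : ‖α • s + β • L‖ ≤ α * ‖s‖ + β * ‖L‖ := by
      calc ‖α • s + β • L‖ ≤ ‖α • s‖ + ‖β • L‖ := norm_add_le _ _
      _ = α * ‖s‖ + β * ‖L‖ := by
          rw [norm_smul, norm_smul, Real.norm_eq_abs, Real.norm_eq_abs,
            abs_of_pos hα0, abs_of_nonneg hβ0]
    have h2 : ‖α • s + β • L‖ ^ 2 ≤ (α * ‖s‖ + β * ‖L‖) ^ 2 :=
      pow_le_pow_left₀ (norm_nonneg _) h1 2
    nlinarith [sq_nonneg (α * ‖s‖ - β * ‖L‖)]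
  have hLe : -(‖L‖ * p) ≤ ⟪L, e⟫ := by
    have h1 : |⟪L, e⟫| ≤ ‖L‖ * ‖e‖ := abs_real_inner_le_norm L e
    have h2 : ‖L‖ * ‖e‖ ≤ ‖L‖ * p := mul_le_mul_of_nonneg_left he (norm_nonneg _)
    linarith [(abs_le.1 h1).1]
  exact irmgl_arith η₀ η₁ ν₀ ν₁ τ p η δ C ‖r‖ ‖s‖ ‖L‖ α β ⟪s, e⟫ ⟪L, e⟫
    (‖α • s + β • L‖ ^ 2) (‖irmglStep g σ A η₀ η₁ ν₀ ν₁ ν₂ vδ u - udag‖ ^ 2) (‖e‖ ^ 2)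
    hη₀ hη₁ hν₀ hν₁ hτ hp hδ hCdef hC hres hα1 hα2 hα0 hα3 hβ0 hβ1 hβ2
    (norm_nonneg L) hse' hLe hd hEeq

/-- Cumulative decrease along the iteration. -/
lemma seq_decrease {n m : ℕ} (g : Fin n → Fin n → ℝ) (σ : ℝ)
    (A : EuclideanSpace ℝ (Fin n) →L[ℝ] EuclideanSpace ℝ (Fin m))
    (η₀ η₁ ν₀ ν₁ ν₂ τ p η δ : ℝ)
    (hη₀ : 0 < η₀) (hη₁ : 0 < η₁) (hν₀ : 0 < ν₀) (hν₁ : 0 < ν₁) (hν₂ : 0 < ν₂)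
    (hτ : 1 < τ) (hp : 0 < p) (hηpos : 0 < η)
    (hηle : η ≤ min (η₀ / ‖A‖ ^ 2) η₁) (hδ : 0 < δ)
    (udag : EuclideanSpace ℝ (Fin n)) (v vδ : EuclideanSpace ℝ (Fin m))
    (hsol : A udag = v) (hnoise : ‖vδ - v‖ ≤ δ)
    (C : ℝ) (hCdef : C = η - η₁ / τ - ν₀ * (p + ν₁) - η₀ * η₁) (hC : 0 < C)
    (u₀ : EuclideanSpace ℝ (Fin n)) (hu₀ : ‖u₀ - udag‖ ≤ p) (N : ℕ)
    (hall : ∀ k ≤ N, τ * δ < ‖A (irmglSeq g σ A η₀ η₁ ν₀ ν₁ ν₂ vδ u₀ k) - vδ‖) :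
    ‖irmglSeq g σ A η₀ η₁ ν₀ ν₁ ν₂ vδ u₀ (N + 1) - udag‖ ^ 2
      + 2 * (N + 1 : ℝ) * C * τ ^ 2 * δ ^ 2 ≤ ‖u₀ - udag‖ ^ 2 := by
  induction N with
  | zero =>
    have h1 := step_key g σ A η₀ η₁ ν₀ ν₁ ν₂ τ p η δ hη₀ hη₁ hν₀ hν₁ hν₂ hτ hp hηpos
      hηle hδ udag v vδ hsol hnoise C hCdef hC u₀ hu₀ (hall 0 le_rfl)
    have h2 : irmglSeq g σ A η₀ η₁ ν₀ ν₁ ν₂ vδ u₀ 1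
        = irmglStep g σ A η₀ η₁ ν₀ ν₁ ν₂ vδ u₀ := rfl
    rw [h2]
    push_cast
    linarith
  | succ N ih =>
    have h1 := ih (fun k hk => hall k (hk.trans (Nat.le_succ N)))
    have hCτδ : 0 < 2 * C * τ ^ 2 * δ ^ 2 := by positivity
    have hmono : 0 ≤ 2 * (N + 1 : ℝ) * C * τ ^ 2 * δ ^ 2 := by positivity
    have hu₀sq : ‖u₀ - udag‖ ^ 2 ≤ p ^ 2 :=
      pow_le_pow_left₀ (norm_nonneg _) hu₀ 2
    have hek : ‖irmglSeq g σ A η₀ η₁ ν₀ ν₁ ν₂ vδ u₀ (N + 1) - udag‖ ≤ p := by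
      nlinarith [norm_nonneg (irmglSeq g σ A η₀ η₁ ν₀ ν₁ ν₂ vδ u₀ (N + 1) - udag)]
    have h2 := step_key g σ A η₀ η₁ ν₀ ν₁ ν₂ τ p η δ hη₀ hη₁ hν₀ hν₁ hν₂ hτ hp hηpos
      hηle hδ udag v vδ hsol hnoise C hCdef hC _ hek (hall (N + 1) le_rfl)
    have h3 : irmglSeq g σ A η₀ η₁ ν₀ ν₁ ν₂ vδ u₀ (N + 1 + 1)
        = irmglStep g σ A η₀ η₁ ν₀ ν₁ ν₂ vδ
            (irmglSeq g σ A η₀ η₁ ν₀ ν₁ ν₂ vδ u₀ (N + 1)) := rfl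
    rw [h3]
    push_cast
    push_cast at h1
    linarith

/-- Finite termination of the discrepancy principle for IRMGL. -/
theorem stmt2 (n m : ℕ) (g : Fin n → Fin n → ℝ) (σ : ℝ) (hσ : 0 < σ)
    (hgsymm : ∀ a b, g a b = g b a) (hgnn : ∀ a b, 0 ≤ g a b) (hgdiag : ∀ a, g a a = 0)
    (A : EuclideanSpace ℝ (Fin n) →L[ℝ] EuclideanSpace ℝ (Fin m))
    (η₀ η₁ ν₀ ν₁ ν₂ τ p η δ : ℝ)
    (hη₀ : 0 < η₀) (hη₁ : 0 < η₁) (hν₀ : 0 < ν₀) (hν₁ : 0 < ν₁) (hν₂ : 0 < ν₂)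
    (hτ : 1 < τ) (hp : 0 < p) (hηpos : 0 < η)
    (hηle : η ≤ min (η₀ / ‖A‖ ^ 2) η₁) (hδ : 0 < δ)
    (udag : EuclideanSpace ℝ (Fin n)) (v vδ : EuclideanSpace ℝ (Fin m))
    (hsol : A udag = v) (hnoise : ‖vδ - v‖ ≤ δ)
    (C : ℝ) (hCdef : C = η - η₁ / τ - ν₀ * (p + ν₁) - η₀ * η₁) (hC : 0 < C)
    (u₀ : EuclideanSpace ℝ (Fin n)) (hu₀ : ‖u₀ - udag‖ ≤ p) :
    (∀ N : ℕ, (∀ k ≤ N, τ * δ < ‖A (irmglSeq g σ A η₀ η₁ ν₀ ν₁ ν₂ vδ u₀ k) - vδ‖) →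
        2 * (N + 1 : ℝ) * C * τ ^ 2 * δ ^ 2 ≤ ‖u₀ - udag‖ ^ 2) ∧
      ∃ kδ : ℕ, ‖A (irmglSeq g σ A η₀ η₁ ν₀ ν₁ ν₂ vδ u₀ kδ) - vδ‖ ≤ τ * δ ∧
        ∀ k < kδ, τ * δ < ‖A (irmglSeq g σ A η₀ η₁ ν₀ ν₁ ν₂ vδ u₀ k) - vδ‖ := by
  have part1 : ∀ N : ℕ,
      (∀ k ≤ N, τ * δ < ‖A (irmglSeq g σ A η₀ η₁ ν₀ ν₁ ν₂ vδ u₀ k) - vδ‖) →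
      2 * (N + 1 : ℝ) * C * τ ^ 2 * δ ^ 2 ≤ ‖u₀ - udag‖ ^ 2 := by
    intro N hN
    have h1 := seq_decrease g σ A η₀ η₁ ν₀ ν₁ ν₂ τ p η δ hη₀ hη₁ hν₀ hν₁ hν₂ hτ hp
      hηpos hηle hδ udag v vδ hsol hnoise C hCdef hC u₀ hu₀ N hN
    nlinarith [sq_nonneg ‖irmglSeq g σ A η₀ η₁ ν₀ ν₁ ν₂ vδ u₀ (N + 1) - udag‖]
  refine ⟨part1, ?_⟩
  have hex : ∃ k : ℕ, ‖A (irmglSeq g σ A η₀ η₁ ν₀ ν₁ ν₂ vδ u₀ k) - vδ‖ ≤ τ * δ := by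
    by_contra hno
    push_neg at hno
    obtain ⟨N, hN⟩ := exists_nat_gt (p ^ 2 / (2 * C * τ ^ 2 * δ ^ 2))
    have h1 := part1 N (fun k _ => hno k)
    have hpos : 0 < 2 * C * τ ^ 2 * δ ^ 2 := by positivity
    rw [div_lt_iff₀ hpos] at hN
    have hu₀sq : ‖u₀ - udag‖ ^ 2 ≤ p ^ 2 :=
      pow_le_pow_left₀ (norm_nonneg _) hu₀ 2
    have hNle : (N : ℝ) ≤ (N : ℝ) + 1 := by linarith
    nlinarith [hN, h1, hu₀sq, hpos]
  exact ⟨Nat.find hex, Nat.find_spec hex,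
    fun k hk => lt_of_not_ge (Nat.find_min hex hk)⟩
end

section
/- Monotonicity and residual summability for the exact-data IRMGL iteration: Let (u_k) be the IRMGL iterates with exact data v started at u₀ with ‖u₀ − u†‖ ≤ ℘, and assume C₀ := η − ν₀(℘ + ν₁) − η₀η₁ > 0. Then ‖u_k − u†‖ ≤ ℘ for all k ≥ 0; for every k ≥ 0 one has ‖u_{k+1} − u†‖² − ‖u_k − u†‖² ≤ −2C₀·‖Au_k − v‖², so the sequence (‖u_k − u†‖) is monotonically decreasing; moreover Σ_{k=0}^∞ ‖Au_k − v‖² ≤ (1/(2C₀))·‖u₀ − u†‖², and in particular ‖Au_k − v‖ → 0 as k → ∞. -/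
open scoped BigOperators RealInnerProductSpace Classical
open ContinuousLinearMap Filter

set_option maxHeartbeats 1000000 in
lemma irmgl_step_est {n m : ℕ} (g : Fin n → Fin n → ℝ) (σ : ℝ)
    (A : EuclideanSpace ℝ (Fin n) →L[ℝ] EuclideanSpace ℝ (Fin m))
    (η₀ η₁ ν₀ ν₁ ν₂ p η : ℝ)
    (hη₀ : 0 < η₀) (hη₁ : 0 < η₁) (hν₀ : 0 < ν₀) (hν₁ : 0 < ν₁) (hν₂ : 0 < ν₂)
    (hp : 0 < p) (hηpos : 0 < η) (hηle : η ≤ min (η₀ / ‖A‖ ^ 2) η₁)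
    (udag : EuclideanSpace ℝ (Fin n)) (v : EuclideanSpace ℝ (Fin m)) (hsol : A udag = v)
    (C₀ : ℝ) (hC₀def : C₀ = η - ν₀ * (p + ν₁) - η₀ * η₁)
    (u : EuclideanSpace ℝ (Fin n)) (hu : ‖u - udag‖ ≤ p) :
    ‖irmglStep g σ A η₀ η₁ ν₀ ν₁ ν₂ v u - udag‖ ^ 2
      ≤ ‖u - udag‖ ^ 2 - 2 * C₀ * ‖A u - v‖ ^ 2 := by
  set r : EuclideanSpace ℝ (Fin m) := A u - v with hr
  set e : EuclideanSpace ℝ (Fin n) := u - udag with he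
  set L : EuclideanSpace ℝ (Fin n) := lapCLM g σ u u with hL
  set a : ℝ := alphaStep A η₀ η₁ v u with ha
  set b : ℝ := betaStep g σ A ν₀ ν₁ ν₂ v u with hb
  have hAe : A e = r := by rw [he, hr, map_sub, hsol]
  have hinner : ⟪e, adjoint A r⟫ = ‖r‖ ^ 2 := by
    rw [adjoint_inner_right, hAe, real_inner_self_eq_norm_sq]
  -- norm of adjoint application
  have hadjle : ‖adjoint A r‖ ≤ ‖A‖ * ‖r‖ := by
    calc ‖adjoint A r‖ ≤ ‖adjoint A‖ * ‖r‖ := (adjoint A).le_opNorm r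
    _ = ‖A‖ * ‖r‖ := by rw [LinearIsometryEquiv.norm_map]
  have hη₁' : η ≤ η₁ := le_trans hηle (min_le_right _ _)
  -- α bounds
  have hαnn : 0 ≤ a := by
    rw [ha, alphaStep]
    split_ifs with h
    · exact le_min (by positivity) hη₁.le
    · exact hη₁.le
  have hαle : a ≤ η₁ := by
    rw [ha, alphaStep]
    split_ifs with h
    · exact min_le_right _ _
    · exact le_rfl
  have hαge : η * ‖r‖ ^ 2 ≤ a * ‖r‖ ^ 2 := by
    rcases eq_or_ne r 0 with hr0 | hr0
    · simp [hr0]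
    · have hAr : adjoint A r ≠ 0 := by
        intro h0
        have : ‖r‖ ^ 2 = 0 := by rw [← hinner, h0, inner_zero_right]
        exact hr0 (by simpa using (pow_eq_zero_iff (n := 2) (by norm_num)).mp this)
      have hAnorm : 0 < ‖A‖ := by
        rcases (norm_nonneg A).lt_or_eq with h | h
        · exact h
        · exfalso
          have h2 : ‖adjoint A r‖ ≤ 0 := by
            have := hadjle; rw [← h] at this; simpa using this
          exact hAr (norm_le_zero_iff.mp h2)
      have hArpos : 0 < ‖adjoint A r‖ := norm_pos_iff.mpr hAr
      have hrpos : 0 < ‖r‖ := norm_pos_iff.mpr hr0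
      have hdiv : η₀ / ‖A‖ ^ 2 ≤ η₀ * ‖r‖ ^ 2 / ‖adjoint A r‖ ^ 2 := by
        rw [div_le_div_iff₀ (by positivity) (by positivity)]
        nlinarith [mul_le_mul hadjle hadjle (norm_nonneg _) (by positivity : (0:ℝ) ≤ ‖A‖ * ‖r‖)]
      have : η ≤ a := by
        rw [ha, alphaStep, if_pos hAr]
        exact le_min (le_trans (le_trans hηle (min_le_left _ _)) hdiv) hη₁'
      exact mul_le_mul_of_nonneg_right this (sq_nonneg _)
  have hF2 : a * ‖adjoint A r‖ ^ 2 ≤ η₀ * ‖r‖ ^ 2 := by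
    rcases eq_or_ne (adjoint A r) 0 with h0 | h0
    · simp [h0]; positivity
    · have hArpos : 0 < ‖adjoint A r‖ := norm_pos_iff.mpr h0
      have : a ≤ η₀ * ‖r‖ ^ 2 / ‖adjoint A r‖ ^ 2 := by
        rw [ha, alphaStep, if_pos h0]; exact min_le_left _ _
      calc a * ‖adjoint A r‖ ^ 2 ≤ (η₀ * ‖r‖ ^ 2 / ‖adjoint A r‖ ^ 2) * ‖adjoint A r‖ ^ 2 :=
            mul_le_mul_of_nonneg_right this (by positivity)
      _ = η₀ * ‖r‖ ^ 2 := by field_simp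
  -- β bounds
  have hβnn : 0 ≤ b := by
    rw [hb, betaStep]
    split_ifs with h
    · have hLpos : 0 < ‖lapCLM g σ u u‖ := norm_pos_iff.mpr h
      exact le_min (le_min (by positivity) (by positivity)) hν₂.le |>.trans_eq' rfl
    · exact le_rfl
  have hF3 : b * ‖L‖ ≤ ν₀ * ‖r‖ ^ 2 := by
    rcases eq_or_ne (lapCLM g σ u u) 0 with h0 | h0
    · rw [hL, h0]; simp; positivity
    · have hLpos : 0 < ‖lapCLM g σ u u‖ := norm_pos_iff.mpr h0
      have : b ≤ ν₀ * ‖r‖ ^ 2 / ‖lapCLM g σ u u‖ := by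
        rw [hb, betaStep, if_pos h0]
        exact le_trans (min_le_left _ _) (min_le_left _ _)
      rw [hL]
      calc b * ‖lapCLM g σ u u‖ ≤ (ν₀ * ‖r‖ ^ 2 / ‖lapCLM g σ u u‖) * ‖lapCLM g σ u u‖ :=
            mul_le_mul_of_nonneg_right this hLpos.le
      _ = ν₀ * ‖r‖ ^ 2 := by field_simp
  have hF4 : b * ‖L‖ ≤ ν₁ := by
    rcases eq_or_ne (lapCLM g σ u u) 0 with h0 | h0
    · rw [hL, h0]; simp; positivity
    · have hLpos : 0 < ‖lapCLM g σ u u‖ := norm_pos_iff.mpr h0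
      have : b ≤ ν₁ / ‖lapCLM g σ u u‖ := by
        rw [hb, betaStep, if_pos h0]
        exact le_trans (min_le_left _ _) (min_le_right _ _)
      rw [hL]
      calc b * ‖lapCLM g σ u u‖ ≤ (ν₁ / ‖lapCLM g σ u u‖) * ‖lapCLM g σ u u‖ :=
            mul_le_mul_of_nonneg_right this hLpos.le
      _ = ν₁ := by field_simp
  -- rewrite the step
  have hstep : irmglStep g σ A η₀ η₁ ν₀ ν₁ ν₂ v u - udag
      = e - (a • adjoint A r + b • L) := by
    rw [irmglStep, he, hr, hL, ha, hb]; abel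
  rw [hstep, norm_sub_sq_real]
  have hinnsum : ⟪e, a • adjoint A r + b • L⟫ = a * ‖r‖ ^ 2 + b * ⟪e, L⟫ := by
    rw [inner_add_right, real_inner_smul_right, real_inner_smul_right, hinner]
  rw [hinnsum]
  -- bound the correction norm
  have hsn : ‖a • adjoint A r + b • L‖ ≤ a * ‖adjoint A r‖ + b * ‖L‖ := by
    calc ‖a • adjoint A r + b • L‖ ≤ ‖a • adjoint A r‖ + ‖b • L‖ := norm_add_le _ _
    _ = a * ‖adjoint A r‖ + b * ‖L‖ := by
        rw [norm_smul, norm_smul, Real.norm_eq_abs, Real.norm_eq_abs,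
          abs_of_nonneg hαnn, abs_of_nonneg hβnn]
  have hsq : ‖a • adjoint A r + b • L‖ ^ 2
      ≤ 2 * (a * ‖adjoint A r‖) ^ 2 + 2 * (b * ‖L‖) ^ 2 := by
    nlinarith [sq_nonneg (a * ‖adjoint A r‖ - b * ‖L‖), norm_nonneg (a • adjoint A r + b • L),
      mul_nonneg hαnn (norm_nonneg (adjoint A r)), mul_nonneg hβnn (norm_nonneg L)]
  have hcs : -(‖e‖ * ‖L‖) ≤ ⟪e, L⟫ := neg_abs_le _ |>.trans' (by
    exact neg_le_neg (abs_real_inner_le_norm e L))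
  have hbC : -(ν₀ * ‖r‖ ^ 2 * p) ≤ b * ⟪e, L⟫ := by
    have h1 : b * (-(‖e‖ * ‖L‖)) ≤ b * ⟪e, L⟫ := mul_le_mul_of_nonneg_left hcs hβnn
    have h2 : b * ‖L‖ * ‖e‖ ≤ ν₀ * ‖r‖ ^ 2 * p :=
      mul_le_mul hF3 hu (norm_nonneg _) (by positivity)
    nlinarith
  have hA2 : (a * ‖adjoint A r‖) ^ 2 ≤ η₀ * η₁ * ‖r‖ ^ 2 := by
    have h1 : a * (a * ‖adjoint A r‖ ^ 2) ≤ η₁ * (η₀ * ‖r‖ ^ 2) :=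
      mul_le_mul hαle hF2 (by positivity) hη₁.le
    nlinarith [h1]
  have hB2 : (b * ‖L‖) ^ 2 ≤ ν₀ * ν₁ * ‖r‖ ^ 2 := by
    have h1 : (b * ‖L‖) * (b * ‖L‖) ≤ (ν₀ * ‖r‖ ^ 2) * ν₁ :=
      mul_le_mul hF3 hF4 (mul_nonneg hβnn (norm_nonneg L)) (by positivity)
    nlinarith [h1]
  subst hC₀def
  linarith [hαge, hbC, hsq, hA2, hB2]

/-- Monotonicity and residual summability for the exact-data IRMGL iteration. -/
theorem stmt3 (n m : ℕ) (g : Fin n → Fin n → ℝ) (σ : ℝ) (hσ : 0 < σ)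
    (hgsymm : ∀ a b, g a b = g b a) (hgnn : ∀ a b, 0 ≤ g a b) (hgdiag : ∀ a, g a a = 0)
    (A : EuclideanSpace ℝ (Fin n) →L[ℝ] EuclideanSpace ℝ (Fin m))
    (η₀ η₁ ν₀ ν₁ ν₂ p η : ℝ)
    (hη₀ : 0 < η₀) (hη₁ : 0 < η₁) (hν₀ : 0 < ν₀) (hν₁ : 0 < ν₁) (hν₂ : 0 < ν₂)
    (hp : 0 < p) (hηpos : 0 < η) (hηle : η ≤ min (η₀ / ‖A‖ ^ 2) η₁)
    (udag : EuclideanSpace ℝ (Fin n)) (v : EuclideanSpace ℝ (Fin m)) (hsol : A udag = v)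
    (C₀ : ℝ) (hC₀def : C₀ = η - ν₀ * (p + ν₁) - η₀ * η₁) (hC₀ : 0 < C₀)
    (u₀ : EuclideanSpace ℝ (Fin n)) (hu₀ : ‖u₀ - udag‖ ≤ p) :
    (∀ k, ‖irmglSeq g σ A η₀ η₁ ν₀ ν₁ ν₂ v u₀ k - udag‖ ≤ p) ∧
      (∀ k, ‖irmglSeq g σ A η₀ η₁ ν₀ ν₁ ν₂ v u₀ (k + 1) - udag‖ ^ 2
          - ‖irmglSeq g σ A η₀ η₁ ν₀ ν₁ ν₂ v u₀ k - udag‖ ^ 2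
          ≤ -2 * C₀ * ‖A (irmglSeq g σ A η₀ η₁ ν₀ ν₁ ν₂ v u₀ k) - v‖ ^ 2) ∧
      Antitone (fun k => ‖irmglSeq g σ A η₀ η₁ ν₀ ν₁ ν₂ v u₀ k - udag‖) ∧
      Summable (fun k => ‖A (irmglSeq g σ A η₀ η₁ ν₀ ν₁ ν₂ v u₀ k) - v‖ ^ 2) ∧
      (∑' k : ℕ, ‖A (irmglSeq g σ A η₀ η₁ ν₀ ν₁ ν₂ v u₀ k) - v‖ ^ 2)
        ≤ 1 / (2 * C₀) * ‖u₀ - udag‖ ^ 2 ∧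
      Tendsto (fun k => ‖A (irmglSeq g σ A η₀ η₁ ν₀ ν₁ ν₂ v u₀ k) - v‖) atTop (nhds 0) := by
  set S : ℕ → EuclideanSpace ℝ (Fin n) := irmglSeq g σ A η₀ η₁ ν₀ ν₁ ν₂ v u₀ with hS
  have hsq_le : ∀ x y : ℝ, 0 ≤ x → 0 ≤ y → x ^ 2 ≤ y ^ 2 → x ≤ y := by
    intro x y hx hy h; nlinarith
  have hb : ∀ k, ‖S k - udag‖ ≤ p ∧
      ‖S (k + 1) - udag‖ ^ 2 ≤ ‖S k - udag‖ ^ 2 - 2 * C₀ * ‖A (S k) - v‖ ^ 2 := by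
    intro k
    induction k with
    | zero =>
      exact ⟨hu₀, irmgl_step_est g σ A η₀ η₁ ν₀ ν₁ ν₂ p η hη₀ hη₁ hν₀ hν₁ hν₂ hp hηpos hηle
        udag v hsol C₀ hC₀def u₀ hu₀⟩
    | succ k ih =>
      have hnn : 0 ≤ 2 * C₀ * ‖A (S k) - v‖ ^ 2 := by positivity
      have hsqp : ‖S k - udag‖ ^ 2 ≤ p ^ 2 :=
        pow_le_pow_left₀ (norm_nonneg _) ih.1 2
      have hk1 : ‖S (k + 1) - udag‖ ≤ p :=
        hsq_le _ _ (norm_nonneg _) hp.le (by linarith [ih.2])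
      exact ⟨hk1, irmgl_step_est g σ A η₀ η₁ ν₀ ν₁ ν₂ p η hη₀ hη₁ hν₀ hν₁ hν₂ hp hηpos hηle
        udag v hsol C₀ hC₀def (S (k + 1)) hk1⟩
  have hdiff : ∀ k, ‖S (k + 1) - udag‖ ^ 2 - ‖S k - udag‖ ^ 2
      ≤ -2 * C₀ * ‖A (S k) - v‖ ^ 2 := by
    intro k; linarith [(hb k).2]
  have hanti : Antitone fun k => ‖S k - udag‖ := by
    apply antitone_nat_of_succ_le
    intro k
    have hnn : 0 ≤ 2 * C₀ * ‖A (S k) - v‖ ^ 2 := by positivity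
    exact hsq_le _ _ (norm_nonneg _) (norm_nonneg _) (by linarith [(hb k).2])
  have h2C : 0 < 2 * C₀ := by linarith
  have hpart : ∀ N, 2 * C₀ * ∑ k ∈ Finset.range N, ‖A (S k) - v‖ ^ 2
      ≤ ‖u₀ - udag‖ ^ 2 - ‖S N - udag‖ ^ 2 := by
    intro N
    induction N with
    | zero => simp [hS, irmglSeq]
    | succ N ih =>
      rw [Finset.sum_range_succ, mul_add]
      have h0 : S 0 = u₀ := rfl
      linarith [(hb N).2]
  have hkey : ∀ N, ∑ k ∈ Finset.range N, ‖A (S k) - v‖ ^ 2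
      ≤ 1 / (2 * C₀) * ‖u₀ - udag‖ ^ 2 := by
    intro N
    have h := hpart N
    have hnn : 0 ≤ ‖S N - udag‖ ^ 2 := sq_nonneg _
    calc ∑ k ∈ Finset.range N, ‖A (S k) - v‖ ^ 2 ≤ ‖u₀ - udag‖ ^ 2 / (2 * C₀) := by
          rw [le_div_iff₀ h2C]; linarith
    _ = 1 / (2 * C₀) * ‖u₀ - udag‖ ^ 2 := by ring
  have hsummable : Summable fun k => ‖A (S k) - v‖ ^ 2 :=
    summable_of_sum_range_le (fun k => sq_nonneg _) hkey
  have htsum : (∑' k : ℕ, ‖A (S k) - v‖ ^ 2) ≤ 1 / (2 * C₀) * ‖u₀ - udag‖ ^ 2 :=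
    Real.tsum_le_of_sum_range_le (fun k => sq_nonneg _) hkey
  have htend : Tendsto (fun k => ‖A (S k) - v‖) atTop (nhds 0) := by
    have h0 : Tendsto (fun k => ‖A (S k) - v‖ ^ 2) atTop (nhds 0) :=
      hsummable.tendsto_atTop_zero
    have h1 : Tendsto (fun k => Real.sqrt (‖A (S k) - v‖ ^ 2)) atTop (nhds (Real.sqrt 0)) :=
      (Real.continuous_sqrt.tendsto 0).comp h0
    have heq : (fun k => Real.sqrt (‖A (S k) - v‖ ^ 2)) = fun k => ‖A (S k) - v‖ :=
      funext fun k => Real.sqrt_sq (norm_nonneg _)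
    rw [heq, Real.sqrt_zero] at h1
    exact h1
  exact ⟨fun k => (hb k).1, hdiff, hanti, hsummable, htsum, htend⟩
end

section
/- Convergence of the exact-data IRMGL iteration: Let (u_k) be the IRMGL iterates with exact data v started at u₀ with ‖u₀ − u†‖ ≤ ℘, and assume C₀ := η − ν₀(℘ + ν₁) − η₀η₁ > 0. Then the sequence (u_k) is a Cauchy sequence and converges to a limit û ∈ U satisfying Aû = v; that is, the iterates converge to a solution of the equation Au = v. -/
open scoped BigOperators RealInnerProductSpace Classical
open ContinuousLinearMap Filter

noncomputable section

set_option maxHeartbeats 1000000 in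
lemma step_ineq {n m : ℕ} (g : Fin n → Fin n → ℝ) (σ : ℝ)
    (A : EuclideanSpace ℝ (Fin n) →L[ℝ] EuclideanSpace ℝ (Fin m))
    (η₀ η₁ ν₀ ν₁ ν₂ η q : ℝ)
    (hη₀ : 0 < η₀) (hη₁ : 0 < η₁) (hν₀ : 0 < ν₀) (hν₁ : 0 < ν₁) (hν₂ : 0 < ν₂)
    (hηpos : 0 < η) (hηle : η ≤ min (η₀ / ‖A‖ ^ 2) η₁)
    (v : EuclideanSpace ℝ (Fin m)) (z u : EuclideanSpace ℝ (Fin n))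
    (hz : A z = v) (hq : ‖u - z‖ ≤ q) :
    ‖irmglStep g σ A η₀ η₁ ν₀ ν₁ ν₂ v u - z‖ ^ 2 ≤
      ‖u - z‖ ^ 2 - 2 * η * ‖A u - v‖ ^ 2
        + 2 * (ν₀ * (q + ν₁) + η₀ * η₁) * ‖A u - v‖ ^ 2 := by
  set r : EuclideanSpace ℝ (Fin m) := A u - v with hr
  set ar : EuclideanSpace ℝ (Fin n) := adjoint A r with har
  set L : EuclideanSpace ℝ (Fin n) := lapCLM g σ u u with hL
  set α : ℝ := alphaStep A η₀ η₁ v u with halpha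
  set β : ℝ := betaStep g σ A ν₀ ν₁ ν₂ v u with hbeta
  have hq0 : 0 ≤ q := le_trans (norm_nonneg _) hq
  have hα0 : 0 ≤ α := by
    rw [halpha, alphaStep]
    split_ifs with h
    · exact le_min (div_nonneg (by positivity) (by positivity)) hη₁.le
    · exact hη₁.le
  have hαle : α ≤ η₁ := by
    rw [halpha, alphaStep]
    split_ifs with h
    · exact min_le_right _ _
    · exact le_rfl
  have hαar : α * ‖ar‖ ^ 2 ≤ η₀ * ‖r‖ ^ 2 := by
    by_cases h : ar = 0
    · rw [h]; simp; positivity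
    · have har0 : (0:ℝ) < ‖ar‖ ^ 2 := pow_pos (norm_pos_iff.mpr h) 2
      have h1 : α ≤ η₀ * ‖r‖ ^ 2 / ‖ar‖ ^ 2 := by
        rw [halpha, alphaStep, ← hr, ← har, if_pos h]
        exact min_le_left _ _
      calc α * ‖ar‖ ^ 2 ≤ (η₀ * ‖r‖ ^ 2 / ‖ar‖ ^ 2) * ‖ar‖ ^ 2 :=
            mul_le_mul_of_nonneg_right h1 har0.le
        _ = η₀ * ‖r‖ ^ 2 := div_mul_cancel₀ _ har0.ne'
  have hrsq : ⟪ar, u - z⟫ = ‖r‖ ^ 2 := by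
    rw [har, adjoint_inner_left]
    have hA : A (u - z) = r := by rw [map_sub, hz, hr]
    rw [hA, real_inner_self_eq_norm_sq]
  have hηα : η * ‖r‖ ^ 2 ≤ α * ‖r‖ ^ 2 := by
    by_cases h : ar = 0
    · have h0 : ‖r‖ ^ 2 = 0 := by rw [← hrsq, h, inner_zero_left]
      rw [h0]; simp
    · apply mul_le_mul_of_nonneg_right _ (by positivity)
      rw [halpha, alphaStep, ← hr, ← har, if_pos h]
      refine le_min ?_ (hηle.trans (min_le_right _ _))
      have hA : A ≠ 0 := by
        intro hA0
        exact h (by rw [har, hA0]; simp)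
      have hAn : (0:ℝ) < ‖A‖ := norm_pos_iff.mpr hA
      have harle : ‖ar‖ ≤ ‖A‖ * ‖r‖ := by
        calc ‖ar‖ ≤ ‖adjoint A‖ * ‖r‖ := le_opNorm _ _
          _ = ‖A‖ * ‖r‖ := by rw [LinearIsometryEquiv.norm_map]
      have har0 : (0:ℝ) < ‖ar‖ := norm_pos_iff.mpr h
      calc η ≤ η₀ / ‖A‖ ^ 2 := hηle.trans (min_le_left _ _)
        _ ≤ η₀ * ‖r‖ ^ 2 / ‖ar‖ ^ 2 := by
            rw [div_le_div_iff₀ (by positivity) (by positivity)]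
            calc η₀ * ‖ar‖ ^ 2 ≤ η₀ * ((‖A‖ * ‖r‖) ^ 2) := by
                  apply mul_le_mul_of_nonneg_left _ hη₀.le
                  exact pow_le_pow_left₀ (norm_nonneg _) harle 2
              _ = η₀ * ‖r‖ ^ 2 * ‖A‖ ^ 2 := by ring
  have hβ0 : 0 ≤ β := by
    rw [hbeta, betaStep]
    split_ifs with h
    · refine le_min (le_min ?_ ?_) hν₂.le
      · exact div_nonneg (by positivity) (norm_nonneg _)
      · exact div_nonneg hν₁.le (norm_nonneg _)
    · exact le_rfl
  have hβL₀ : β * ‖L‖ ≤ ν₀ * ‖r‖ ^ 2 := by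
    by_cases h : L = 0
    · rw [h]; simp; positivity
    · have hL0 : (0:ℝ) < ‖L‖ := norm_pos_iff.mpr h
      have h1 : β ≤ ν₀ * ‖r‖ ^ 2 / ‖L‖ := by
        rw [hbeta, betaStep, ← hr, ← hL, if_pos h]
        exact le_trans (min_le_left _ _) (min_le_left _ _)
      calc β * ‖L‖ ≤ (ν₀ * ‖r‖ ^ 2 / ‖L‖) * ‖L‖ := mul_le_mul_of_nonneg_right h1 hL0.le
        _ = ν₀ * ‖r‖ ^ 2 := div_mul_cancel₀ _ hL0.ne'
  have hβL₁ : β * ‖L‖ ≤ ν₁ := by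
    by_cases h : L = 0
    · rw [h]; simp; exact hν₁.le
    · have hL0 : (0:ℝ) < ‖L‖ := norm_pos_iff.mpr h
      have h1 : β ≤ ν₁ / ‖L‖ := by
        rw [hbeta, betaStep, ← hr, ← hL, if_pos h]
        exact le_trans (min_le_left _ _) (min_le_right _ _)
      calc β * ‖L‖ ≤ (ν₁ / ‖L‖) * ‖L‖ := mul_le_mul_of_nonneg_right h1 hL0.le
        _ = ν₁ := div_mul_cancel₀ _ hL0.ne'
  have hstep : irmglStep g σ A η₀ η₁ ν₀ ν₁ ν₂ v u - z = (u - z) - (α • ar + β • L) := by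
    rw [irmglStep, ← hr, ← har, ← hL, ← halpha, ← hbeta]
    abel
  have hrsq' : ⟪u - z, ar⟫ = ‖r‖ ^ 2 := (real_inner_comm _ _).trans hrsq
  clear_value r ar L α β
  clear hr har hL halpha hbeta
  rw [hstep, norm_sub_sq_real]
  have hinner : ⟪u - z, α • ar + β • L⟫ = α * ‖r‖ ^ 2 + β * ⟪u - z, L⟫ := by
    rw [inner_add_right, real_inner_smul_right, real_inner_smul_right, hrsq']
  have hcross : -(β * ⟪u - z, L⟫) ≤ q * (β * ‖L‖) := by
    have h1 : -⟪u - z, L⟫ ≤ ‖u - z‖ * ‖L‖ := by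
      have h2 := abs_real_inner_le_norm (u - z) L
      have h3 := neg_abs_le ⟪u - z, L⟫
      linarith
    calc -(β * ⟪u - z, L⟫) = β * (-⟪u - z, L⟫) := by ring
      _ ≤ β * (‖u - z‖ * ‖L‖) := mul_le_mul_of_nonneg_left h1 hβ0
      _ ≤ β * (q * ‖L‖) := by
          exact mul_le_mul_of_nonneg_left
            (mul_le_mul_of_nonneg_right hq (norm_nonneg _)) hβ0
      _ = q * (β * ‖L‖) := by ring
  have hnormsq : ‖α • ar + β • L‖ ^ 2 ≤ 2 * (α * ‖ar‖) ^ 2 + 2 * (β * ‖L‖) ^ 2 := by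
    have h1 : ‖α • ar + β • L‖ ≤ α * ‖ar‖ + β * ‖L‖ := by
      calc ‖α • ar + β • L‖ ≤ ‖α • ar‖ + ‖β • L‖ := norm_add_le _ _
        _ = α * ‖ar‖ + β * ‖L‖ := by
            rw [norm_smul, norm_smul, Real.norm_eq_abs, Real.norm_eq_abs,
              abs_of_nonneg hα0, abs_of_nonneg hβ0]
    nlinarith [norm_nonneg (α • ar + β • L), sq_nonneg (α * ‖ar‖ - β * ‖L‖)]
  have hα2 : (α * ‖ar‖) ^ 2 ≤ η₀ * η₁ * ‖r‖ ^ 2 := by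
    have h1 : α * (α * ‖ar‖ ^ 2) ≤ η₁ * (η₀ * ‖r‖ ^ 2) :=
      mul_le_mul hαle hαar (by positivity) hη₁.le
    have h2 : (α * ‖ar‖) ^ 2 = α * (α * ‖ar‖ ^ 2) := by ring
    linarith
  have hβ2 : (β * ‖L‖) ^ 2 ≤ ν₀ * ν₁ * ‖r‖ ^ 2 := by
    have hb0 : 0 ≤ β * ‖L‖ := by positivity
    have h1 := mul_le_mul hβL₀ hβL₁ hb0 (by positivity : (0:ℝ) ≤ ν₀ * ‖r‖ ^ 2)
    have h2 : (β * ‖L‖) ^ 2 = (β * ‖L‖) * (β * ‖L‖) := by ring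
    linarith
  have hqβ : q * (β * ‖L‖) ≤ q * (ν₀ * ‖r‖ ^ 2) := mul_le_mul_of_nonneg_left hβL₀ hq0
  rw [hinner]
  nlinarith [hηα, hcross, hnormsq, hα2, hβ2, hqβ]

end

open Topology in
set_option maxHeartbeats 2000000 in
/-- Convergence of the exact-data IRMGL iteration. -/
theorem stmt4 (n m : ℕ) (g : Fin n → Fin n → ℝ) (σ : ℝ) (hσ : 0 < σ)
    (hgsymm : ∀ a b, g a b = g b a) (hgnn : ∀ a b, 0 ≤ g a b) (hgdiag : ∀ a, g a a = 0)
    (A : EuclideanSpace ℝ (Fin n) →L[ℝ] EuclideanSpace ℝ (Fin m))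
    (η₀ η₁ ν₀ ν₁ ν₂ p η : ℝ)
    (hη₀ : 0 < η₀) (hη₁ : 0 < η₁) (hν₀ : 0 < ν₀) (hν₁ : 0 < ν₁) (hν₂ : 0 < ν₂)
    (hp : 0 < p) (hηpos : 0 < η) (hηle : η ≤ min (η₀ / ‖A‖ ^ 2) η₁)
    (udag : EuclideanSpace ℝ (Fin n)) (v : EuclideanSpace ℝ (Fin m)) (hsol : A udag = v)
    (C₀ : ℝ) (hC₀def : C₀ = η - ν₀ * (p + ν₁) - η₀ * η₁) (hC₀ : 0 < C₀)
    (u₀ : EuclideanSpace ℝ (Fin n)) (hu₀ : ‖u₀ - udag‖ ≤ p) :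
    CauchySeq (irmglSeq g σ A η₀ η₁ ν₀ ν₁ ν₂ v u₀) ∧
      ∃ uhat : EuclideanSpace ℝ (Fin n),
        Tendsto (irmglSeq g σ A η₀ η₁ ν₀ ν₁ ν₂ v u₀) atTop (nhds uhat) ∧ A uhat = v := by
  set u : ℕ → EuclideanSpace ℝ (Fin n) := irmglSeq g σ A η₀ η₁ ν₀ ν₁ ν₂ v u₀ with hu
  have h0 : u 0 = u₀ := rfl
  have hsucc : ∀ k, u (k + 1) = irmglStep g σ A η₀ η₁ ν₀ ν₁ ν₂ v (u k) := fun k => rfl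
  have hs0 : ∀ i, (0:ℝ) ≤ ‖A (u i) - v‖ ^ 2 := fun i => sq_nonneg _
  -- boundedness: ‖u k - udag‖ ≤ p for all k
  have main : ∀ k, ‖u k - udag‖ ≤ p := by
    intro k
    induction k with
    | zero => rw [h0]; exact hu₀
    | succ k ih =>
      have h := step_ineq g σ A η₀ η₁ ν₀ ν₁ ν₂ η p hη₀ hη₁ hν₀ hν₁ hν₂ hηpos hηle
        v udag (u k) hsol ih
      rw [← hsucc k] at h
      have hc : 2 * (ν₀ * (p + ν₁) + η₀ * η₁) * ‖A (u k) - v‖ ^ 2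
          - 2 * η * ‖A (u k) - v‖ ^ 2 = -(2 * C₀) * ‖A (u k) - v‖ ^ 2 := by
        rw [hC₀def]; ring
      have hsq : ‖u (k+1) - udag‖ ^ 2 ≤ p ^ 2 := by
        have h1 : ‖u k - udag‖ ^ 2 ≤ p ^ 2 := by nlinarith [norm_nonneg (u k - udag)]
        nlinarith [hs0 k, hC₀]
      nlinarith [norm_nonneg (u (k+1) - udag), hp]
  -- decrease inequality
  have decrease : ∀ k, ‖u (k+1) - udag‖ ^ 2 ≤ ‖u k - udag‖ ^ 2
      - 2 * C₀ * ‖A (u k) - v‖ ^ 2 := by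
    intro k
    have h := step_ineq g σ A η₀ η₁ ν₀ ν₁ ν₂ η p hη₀ hη₁ hν₀ hν₁ hν₂ hηpos hηle
      v udag (u k) hsol (main k)
    rw [← hsucc k] at h
    have hc : 2 * (ν₀ * (p + ν₁) + η₀ * η₁) * ‖A (u k) - v‖ ^ 2
        - 2 * η * ‖A (u k) - v‖ ^ 2 = -(2 * C₀) * ‖A (u k) - v‖ ^ 2 := by
      rw [hC₀def]; ring
    linarith
  -- partial sums of squared residuals are bounded
  have sumbd : ∀ K, ∑ i ∈ Finset.range K, ‖A (u i) - v‖ ^ 2 ≤ p ^ 2 / (2 * C₀) := by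
    intro K
    have h1 : 2 * C₀ * ∑ i ∈ Finset.range K, ‖A (u i) - v‖ ^ 2
        ≤ ‖u 0 - udag‖ ^ 2 - ‖u K - udag‖ ^ 2 := by
      induction K with
      | zero => simp
      | succ K ih =>
        rw [Finset.sum_range_succ, mul_add]
        have := decrease K
        linarith
    have h2 : ‖u 0 - udag‖ ^ 2 ≤ p ^ 2 := by nlinarith [norm_nonneg (u 0 - udag), main 0]
    rw [le_div_iff₀ (by positivity : (0:ℝ) < 2 * C₀)]
    nlinarith [sq_nonneg ‖u K - udag‖]
  have hsum : Summable (fun i => ‖A (u i) - v‖ ^ 2) := summable_of_sum_range_le hs0 sumbd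
  -- residuals tend to zero
  have hres : Tendsto (fun k => ‖A (u k) - v‖) atTop (𝓝 0) := by
    have h1 : Tendsto (fun k => ‖A (u k) - v‖ ^ 2) atTop (𝓝 0) := hsum.tendsto_atTop_zero
    have h2 : Tendsto (fun k => Real.sqrt (‖A (u k) - v‖ ^ 2)) atTop (𝓝 (Real.sqrt 0)) :=
      (Real.continuous_sqrt.tendsto 0).comp h1
    have h3 : (fun k => Real.sqrt (‖A (u k) - v‖ ^ 2)) = fun k => ‖A (u k) - v‖ := by
      funext k; exact Real.sqrt_sq (norm_nonneg _)
    rwa [h3, Real.sqrt_zero] at h2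
  have hAu : Tendsto (fun k => A (u k)) atTop (𝓝 v) :=
    tendsto_iff_norm_sub_tendsto_zero.mpr hres
  -- Bolzano–Weierstrass: convergent subsequence
  have hmem : ∀ k, u k ∈ Metric.closedBall udag p := by
    intro k; rw [Metric.mem_closedBall, dist_eq_norm]; exact main k
  obtain ⟨a, ha, φ, hφ, hφtend⟩ :=
    tendsto_subseq_of_bounded Metric.isBounded_closedBall hmem
  rw [IsClosed.closure_eq Metric.isClosed_closedBall] at ha
  have hadist : ‖udag - a‖ ≤ p := by
    rw [Metric.mem_closedBall, dist_eq_norm] at ha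
    rw [norm_sub_rev]; exact ha
  have hAa : A a = v := by
    have h1 : Tendsto (fun j => A (u (φ j))) atTop (𝓝 (A a)) :=
      (A.continuous.tendsto a).comp hφtend
    have h2 : Tendsto (fun j => A (u (φ j))) atTop (𝓝 v) :=
      hAu.comp hφ.tendsto_atTop
    exact tendsto_nhds_unique h1 h2
  -- second application of the step inequality, centered at a
  have hbound2 : ∀ k, ‖u k - a‖ ≤ 2 * p := by
    intro k
    calc ‖u k - a‖ = ‖(u k - udag) + (udag - a)‖ := by rw [sub_add_sub_cancel]
      _ ≤ ‖u k - udag‖ + ‖udag - a‖ := norm_add_le _ _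
      _ ≤ p + p := add_le_add (main k) hadist
      _ = 2 * p := by ring
  set D : ℝ := 2 * (ν₀ * (2 * p + ν₁) + η₀ * η₁) with hD
  have hD0 : 0 ≤ D := by
    rw [hD]; nlinarith [hp.le, hν₀.le, hν₁.le, hη₀.le, hη₁.le]
  have dec2 : ∀ k, ‖u (k+1) - a‖ ^ 2 ≤ ‖u k - a‖ ^ 2 + D * ‖A (u k) - v‖ ^ 2 := by
    intro k
    have h := step_ineq g σ A η₀ η₁ ν₀ ν₁ ν₂ η (2 * p) hη₀ hη₁ hν₀ hν₁ hν₂ hηpos hηle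
      v a (u k) hAa (hbound2 k)
    rw [← hsucc k] at h
    have hη_s : 0 ≤ 2 * η * ‖A (u k) - v‖ ^ 2 := by positivity
    rw [hD]; linarith
  -- chained estimate
  have chain : ∀ K k, K ≤ k → ‖u k - a‖ ^ 2 ≤ ‖u K - a‖ ^ 2
      + D * (∑ i ∈ Finset.range k, ‖A (u i) - v‖ ^ 2
        - ∑ i ∈ Finset.range K, ‖A (u i) - v‖ ^ 2) := by
    intro K k hKk
    induction k, hKk using Nat.le_induction with
    | base => simp
    | succ k hKk ih =>
      have h1 := dec2 k
      rw [Finset.sum_range_succ]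
      have h2 : D * (∑ i ∈ Finset.range k, ‖A (u i) - v‖ ^ 2 + ‖A (u k) - v‖ ^ 2
          - ∑ i ∈ Finset.range K, ‖A (u i) - v‖ ^ 2)
          = D * (∑ i ∈ Finset.range k, ‖A (u i) - v‖ ^ 2
            - ∑ i ∈ Finset.range K, ‖A (u i) - v‖ ^ 2) + D * ‖A (u k) - v‖ ^ 2 := by
        ring
      linarith
  -- partial sums converge, hence Cauchy
  have hT : Tendsto (fun K => ∑ i ∈ Finset.range K, ‖A (u i) - v‖ ^ 2) atTop
      (𝓝 (∑' i, ‖A (u i) - v‖ ^ 2)) := hsum.hasSum.tendsto_sum_nat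
  have hTmono : Monotone (fun K => ∑ i ∈ Finset.range K, ‖A (u i) - v‖ ^ 2) := by
    intro i j hij
    exact Finset.sum_le_sum_of_subset_of_nonneg (Finset.range_subset_range.mpr hij)
      (fun x _ _ => hs0 x)
  -- the squared distance to a tends to 0
  have hsub : Tendsto (fun j => ‖u (φ j) - a‖ ^ 2) atTop (𝓝 0) := by
    have h1 : Tendsto (fun j => ‖u (φ j) - a‖) atTop (𝓝 0) :=
      tendsto_iff_norm_sub_tendsto_zero.mp hφtend
    simpa using h1.pow 2
  have haconv : Tendsto (fun k => ‖u k - a‖ ^ 2) atTop (𝓝 0) := by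
    rw [Metric.tendsto_atTop]
    intro ε hε
    obtain ⟨J, hJ⟩ := Metric.cauchySeq_iff'.mp hT.cauchySeq (ε / (2 * (D + 1)))
      (by positivity)
    obtain ⟨N, hN⟩ := (Metric.tendsto_atTop.mp hsub) (ε / 2) (half_pos hε)
    set j1 := max N J with hj1
    refine ⟨φ j1, fun k hk => ?_⟩
    have hφj1J : J ≤ φ j1 := le_trans (le_max_right N J) (hφ.le_apply)
    have h1 := chain (φ j1) k hk
    have h2 : dist (‖u (φ j1) - a‖ ^ 2) 0 < ε / 2 := hN j1 (le_max_left N J)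
    rw [Real.dist_eq, sub_zero, abs_of_nonneg (sq_nonneg _)] at h2
    have h3 := hJ k (le_trans hφj1J hk)
    rw [Real.dist_eq] at h3
    have h4 : ∑ i ∈ Finset.range J, ‖A (u i) - v‖ ^ 2
        ≤ ∑ i ∈ Finset.range (φ j1), ‖A (u i) - v‖ ^ 2 := hTmono hφj1J
    have h5 : ∑ i ∈ Finset.range J, ‖A (u i) - v‖ ^ 2
        ≤ ∑ i ∈ Finset.range k, ‖A (u i) - v‖ ^ 2 := hTmono (le_trans hφj1J hk)
    have h6 : ∑ i ∈ Finset.range k, ‖A (u i) - v‖ ^ 2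
        - ∑ i ∈ Finset.range J, ‖A (u i) - v‖ ^ 2 < ε / (2 * (D + 1)) := by
      have := abs_lt.mp h3
      linarith [this.2]
    rw [Real.dist_eq, sub_zero, abs_of_nonneg (sq_nonneg _)]
    have hDfrac : D * (ε / (2 * (D + 1))) ≤ ε / 2 := by
      have he : D * (ε / (2 * (D + 1))) = (ε * D) / (2 * (D + 1)) := by ring
      rw [he, div_le_div_iff₀ (by positivity : (0:ℝ) < 2 * (D + 1))
        (by norm_num : (0:ℝ) < 2)]
      nlinarith [hε.le, hD0]
    have h7 : D * (∑ i ∈ Finset.range k, ‖A (u i) - v‖ ^ 2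
        - ∑ i ∈ Finset.range (φ j1), ‖A (u i) - v‖ ^ 2)
        ≤ D * (ε / (2 * (D + 1))) := by
      apply mul_le_mul_of_nonneg_left _ hD0
      linarith
    linarith
  -- convergence of the iterates
  have hnormconv : Tendsto (fun k => ‖u k - a‖) atTop (𝓝 0) := by
    have h2 : Tendsto (fun k => Real.sqrt (‖u k - a‖ ^ 2)) atTop (𝓝 (Real.sqrt 0)) :=
      (Real.continuous_sqrt.tendsto 0).comp haconv
    have h3 : (fun k => Real.sqrt (‖u k - a‖ ^ 2)) = fun k => ‖u k - a‖ := by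
      funext k; exact Real.sqrt_sq (norm_nonneg _)
    rwa [h3, Real.sqrt_zero] at h2
  have huconv : Tendsto u atTop (𝓝 a) := tendsto_iff_norm_sub_tendsto_zero.mpr hnormconv
  exact ⟨huconv.cauchySeq, a, huconv, hAa⟩
end

section
/- Cauchy-type inner product estimate for exact-data IRMGL: Let (u_k) be the IRMGL iterates with exact data v, and suppose ‖u_j − u†‖ ≤ ℘ for all j. Let m ≤ l be indices such that ‖Au_m − v‖ ≤ ‖Au_j − v‖ for all m ≤ j ≤ l − 1. Then |⟨u_m − u_l, u_m − u†⟩| ≤ (η₁ + ℘·ν₀)·Σ_{j=m}^{l−1} ‖Au_j − v‖². -/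
open scoped BigOperators RealInnerProductSpace Classical
open ContinuousLinearMap Filter

/-- Cauchy-type inner product estimate for exact-data IRMGL. -/
theorem stmt5 (n m : ℕ) (g : Fin n → Fin n → ℝ) (σ : ℝ) (hσ : 0 < σ)
    (hgsymm : ∀ a b, g a b = g b a) (hgnn : ∀ a b, 0 ≤ g a b) (hgdiag : ∀ a, g a a = 0)
    (A : EuclideanSpace ℝ (Fin n) →L[ℝ] EuclideanSpace ℝ (Fin m))
    (η₀ η₁ ν₀ ν₁ ν₂ p : ℝ)
    (hη₀ : 0 < η₀) (hη₁ : 0 < η₁) (hν₀ : 0 < ν₀) (hν₁ : 0 < ν₁) (hν₂ : 0 < ν₂)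
    (hp : 0 < p)
    (udag : EuclideanSpace ℝ (Fin n)) (v : EuclideanSpace ℝ (Fin m)) (hsol : A udag = v)
    (u₀ : EuclideanSpace ℝ (Fin n))
    (hball : ∀ j, ‖irmglSeq g σ A η₀ η₁ ν₀ ν₁ ν₂ v u₀ j - udag‖ ≤ p)
    (i l : ℕ) (hil : i ≤ l)
    (hmin : ∀ j, i ≤ j → j < l →
      ‖A (irmglSeq g σ A η₀ η₁ ν₀ ν₁ ν₂ v u₀ i) - v‖
        ≤ ‖A (irmglSeq g σ A η₀ η₁ ν₀ ν₁ ν₂ v u₀ j) - v‖) :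
    |⟪irmglSeq g σ A η₀ η₁ ν₀ ν₁ ν₂ v u₀ i - irmglSeq g σ A η₀ η₁ ν₀ ν₁ ν₂ v u₀ l,
        irmglSeq g σ A η₀ η₁ ν₀ ν₁ ν₂ v u₀ i - udag⟫|
      ≤ (η₁ + p * ν₀) *
        ∑ j ∈ Finset.Ico i l, ‖A (irmglSeq g σ A η₀ η₁ ν₀ ν₁ ν₂ v u₀ j) - v‖ ^ 2 := by
  set U := irmglSeq g σ A η₀ η₁ ν₀ ν₁ ν₂ v u₀ with hU
  have step : ∀ j, ‖A (U i) - v‖ ≤ ‖A (U j) - v‖ →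
      |⟪U j - U (j+1), U i - udag⟫| ≤ (η₁ + p * ν₀) * ‖A (U j) - v‖ ^ 2 := by
    intro j hle
    set α := alphaStep A η₀ η₁ v (U j) with hα
    set β := betaStep g σ A ν₀ ν₁ ν₂ v (U j) with hβ
    set a := adjoint A (A (U j) - v) with ha
    set b := lapCLM g σ (U j) (U j) with hb
    have hdiff : U j - U (j+1) = α • a + β • b := by
      show U j - irmglStep g σ A η₀ η₁ ν₀ ν₁ ν₂ v (U j) = _
      rw [irmglStep]
      abel
    have hα0 : 0 ≤ α := by
      rw [hα, alphaStep]; split_ifs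
      · exact le_min (by positivity) hη₁.le
      · exact hη₁.le
    have hα1 : α ≤ η₁ := by
      rw [hα, alphaStep]; split_ifs
      · exact min_le_right _ _
      · exact le_refl _
    have hβ0 : 0 ≤ β := by
      rw [hβ, betaStep]; split_ifs
      · exact le_min (le_min (by positivity) (by positivity)) hν₂.le
      · exact le_refl _
    have hβb : β * ‖b‖ ≤ ν₀ * ‖A (U j) - v‖ ^ 2 := by
      by_cases h0 : b = 0
      · rw [h0, norm_zero, mul_zero]; positivity
      · have hβle : β ≤ ν₀ * ‖A (U j) - v‖ ^ 2 / ‖b‖ := by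
          rw [hβ, betaStep, if_pos]
          · exact le_trans (min_le_left _ _) (min_le_left _ _)
          · exact h0
        have hbn : (0:ℝ) < ‖b‖ := norm_pos_iff.mpr h0
        calc β * ‖b‖ ≤ (ν₀ * ‖A (U j) - v‖ ^ 2 / ‖b‖) * ‖b‖ :=
              mul_le_mul_of_nonneg_right hβle hbn.le
          _ = ν₀ * ‖A (U j) - v‖ ^ 2 := div_mul_cancel₀ _ hbn.ne'
    have hinner : ⟪U j - U (j+1), U i - udag⟫
        = α * ⟪A (U j) - v, A (U i) - v⟫ + β * ⟪b, U i - udag⟫ := by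
      rw [hdiff, inner_add_left, real_inner_smul_left, real_inner_smul_left, ha,
        ContinuousLinearMap.adjoint_inner_left, map_sub, hsol]
    rw [hinner]
    have h1 : |α * ⟪A (U j) - v, A (U i) - v⟫| ≤ η₁ * ‖A (U j) - v‖ ^ 2 := by
      rw [abs_mul, abs_of_nonneg hα0]
      calc α * |⟪A (U j) - v, A (U i) - v⟫| ≤ η₁ * (‖A (U j) - v‖ * ‖A (U j) - v‖) := by
            apply mul_le_mul hα1 _ (abs_nonneg _) hη₁.le
            exact le_trans (abs_real_inner_le_norm _ _)
              (mul_le_mul_of_nonneg_left hle (norm_nonneg _))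
        _ = η₁ * ‖A (U j) - v‖ ^ 2 := by ring
    have h2 : |β * ⟪b, U i - udag⟫| ≤ p * ν₀ * ‖A (U j) - v‖ ^ 2 := by
      rw [abs_mul, abs_of_nonneg hβ0]
      calc β * |⟪b, U i - udag⟫| ≤ β * (‖b‖ * p) := by
            apply mul_le_mul_of_nonneg_left _ hβ0
            exact le_trans (abs_real_inner_le_norm _ _)
              (mul_le_mul_of_nonneg_left (hball i) (norm_nonneg _))
        _ = (β * ‖b‖) * p := by ring
        _ ≤ (ν₀ * ‖A (U j) - v‖ ^ 2) * p := mul_le_mul_of_nonneg_right hβb hp.le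
        _ = p * ν₀ * ‖A (U j) - v‖ ^ 2 := by ring
    calc |α * ⟪A (U j) - v, A (U i) - v⟫ + β * ⟪b, U i - udag⟫|
        ≤ |α * ⟪A (U j) - v, A (U i) - v⟫| + |β * ⟪b, U i - udag⟫| := abs_add_le _ _
      _ ≤ η₁ * ‖A (U j) - v‖ ^ 2 + p * ν₀ * ‖A (U j) - v‖ ^ 2 := add_le_add h1 h2
      _ = (η₁ + p * ν₀) * ‖A (U j) - v‖ ^ 2 := by ring
  revert hmin
  induction l, hil using Nat.le_induction with
  | base =>
    intro _
    simp
  | succ l hl IH =>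
    intro hmin
    have IH' := IH (fun j hij hjl => hmin j hij (hjl.trans (Nat.lt_succ_self l)))
    have hsplit : U i - U (l+1) = (U i - U l) + (U l - U (l+1)) := by abel
    have hstep := step l (hmin l hl (Nat.lt_succ_self l))
    rw [hsplit, inner_add_left, Finset.sum_Ico_succ_top hl, mul_add]
    exact le_trans (abs_add_le _ _) (add_le_add IH' hstep)
end

section
/- Frobenius-norm Lipschitz bound for the weight matrix: Assume each node has at most N neighbours, i.e. #{b : g(a,b) ≠ 0} ≤ N for every a, and set G := max_{a,b} g(a,b). Then for all x, y : Fin n → ℝ, the weight matrices W_x, W_y with entries (W_x)_{ab} = g(a,b)·exp(−(x(a) − x(b))²/σ) satisfy ‖W_x − W_y‖_F ≤ 2·G·L_h·√N·‖x − y‖₂, where ‖·‖_F denotes the Frobenius norm and ‖x − y‖₂ the Euclidean norm. -/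
open scoped BigOperators RealInnerProductSpace Classical
open ContinuousLinearMap Filter

/-- Frobenius-norm Lipschitz bound for the weight matrix. -/
theorem stmt7 (n : ℕ) (g : Fin n → Fin n → ℝ) (σ : ℝ) (hσ : 0 < σ)
    (hgsymm : ∀ a b, g a b = g b a) (hgnn : ∀ a b, 0 ≤ g a b) (hgdiag : ∀ a, g a a = 0)
    (Lh : ℝ) (hLh : 0 < Lh)
    (hLip : ∀ s t : ℝ, |Real.exp (-s ^ 2 / σ) - Real.exp (-t ^ 2 / σ)| ≤ Lh * |s - t|)
    (N : ℕ) (hN : ∀ a, {b | g a b ≠ 0}.ncard ≤ N)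
    (G : ℝ) (hG : ∀ a b, g a b ≤ G) (hG0 : 0 ≤ G) :
    ∀ x y : EuclideanSpace ℝ (Fin n),
      Real.sqrt (∑ a, ∑ b, (wMat g σ x a b - wMat g σ y a b) ^ 2)
        ≤ 2 * G * Lh * Real.sqrt N * ‖x - y‖ := by
  intro x y
  set d : Fin n → ℝ := fun a => x a - y a with hd
  have hGL : 0 ≤ G * Lh := mul_nonneg hG0 hLh.le
  have hcard : ∀ a : Fin n, ((Finset.univ.filter fun b => g a b ≠ 0)).card ≤ N := by
    intro a
    have h := hN a
    rwa [Set.ncard_eq_toFinset_card', Set.toFinset_setOf] at h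
  have hterm : ∀ a b, (wMat g σ x a b - wMat g σ y a b) ^ 2 ≤
      (if g a b ≠ 0 then (G * Lh) ^ 2 * 2 * (d a ^ 2 + d b ^ 2) else 0) := by
    intro a b
    by_cases h : g a b = 0
    · simp [wMat, h]
    · simp only [h, ne_eq, not_false_eq_true, if_true]
      have h1 : |wMat g σ x a b - wMat g σ y a b| ≤ G * Lh * (|d a| + |d b|) := by
        have heq : wMat g σ x a b - wMat g σ y a b
            = g a b * (Real.exp (-(x a - x b) ^ 2 / σ) - Real.exp (-(y a - y b) ^ 2 / σ)) := by
          simp [wMat]; ring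
        rw [heq, abs_mul, abs_of_nonneg (hgnn a b)]
        have h2 := hLip (x a - x b) (y a - y b)
        have h3 : |(x a - x b) - (y a - y b)| ≤ |d a| + |d b| := by
          have he : (x a - x b) - (y a - y b) = d a - d b := by simp [hd]; ring
          rw [he]
          exact abs_sub (d a) (d b)
        calc g a b * |Real.exp (-(x a - x b) ^ 2 / σ) - Real.exp (-(y a - y b) ^ 2 / σ)|
            ≤ G * (Lh * |(x a - x b) - (y a - y b)|) := by
              apply mul_le_mul (hG a b) h2 (abs_nonneg _) hG0
          _ ≤ G * (Lh * (|d a| + |d b|)) := by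
              apply mul_le_mul_of_nonneg_left (mul_le_mul_of_nonneg_left h3 hLh.le) hG0
          _ = G * Lh * (|d a| + |d b|) := by ring
      have h4 : (wMat g σ x a b - wMat g σ y a b) ^ 2 ≤ (G * Lh * (|d a| + |d b|)) ^ 2 := by
        rw [← sq_abs]
        exact pow_le_pow_left₀ (abs_nonneg _) h1 2
      refine h4.trans ?_
      have h5 : (|d a| + |d b|) ^ 2 ≤ 2 * (d a ^ 2 + d b ^ 2) := by
        have h6 := sq_nonneg (|d a| - |d b|)
        have ha : |d a| ^ 2 = d a ^ 2 := sq_abs _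
        have hb : |d b| ^ 2 = d b ^ 2 := sq_abs _
        nlinarith
      calc (G * Lh * (|d a| + |d b|)) ^ 2 = (G * Lh) ^ 2 * (|d a| + |d b|) ^ 2 := by ring
        _ ≤ (G * Lh) ^ 2 * (2 * (d a ^ 2 + d b ^ 2)) :=
            mul_le_mul_of_nonneg_left h5 (sq_nonneg _)
        _ = (G * Lh) ^ 2 * 2 * (d a ^ 2 + d b ^ 2) := by ring
  have hsum1 : ∀ a : Fin n, (∑ b, if g a b ≠ 0 then d a ^ 2 else 0) ≤ N * d a ^ 2 := by
    intro a
    rw [← Finset.sum_filter]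
    calc (∑ _b ∈ Finset.univ.filter fun b => g a b ≠ 0, d a ^ 2)
        = ((Finset.univ.filter fun b => g a b ≠ 0)).card * d a ^ 2 := by
          rw [Finset.sum_const, nsmul_eq_mul]
      _ ≤ N * d a ^ 2 := by
          apply mul_le_mul_of_nonneg_right _ (sq_nonneg _)
          exact_mod_cast hcard a
  have hsum2 : (∑ a, ∑ b, if g a b ≠ 0 then d b ^ 2 else 0) ≤ N * ∑ b, d b ^ 2 := by
    rw [Finset.sum_comm]
    rw [Finset.mul_sum]
    apply Finset.sum_le_sum
    intro b _
    have hc : (∑ a, if g a b ≠ 0 then d b ^ 2 else 0)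
        = ∑ a, if g b a ≠ 0 then d b ^ 2 else 0 := by
      apply Finset.sum_congr rfl
      intro a _
      rw [hgsymm a b]
    rw [hc]
    exact hsum1 b
  have hnorm : ‖x - y‖ ^ 2 = ∑ a, d a ^ 2 := by
    rw [EuclideanSpace.norm_eq, Real.sq_sqrt (by positivity)]
    apply Finset.sum_congr rfl
    intro a _
    rw [show (x - y) a = x a - y a from rfl, Real.norm_eq_abs, sq_abs]
  have hmain : (∑ a, ∑ b, (wMat g σ x a b - wMat g σ y a b) ^ 2)
      ≤ (2 * G * Lh * Real.sqrt N * ‖x - y‖) ^ 2 := by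
    have step1 : (∑ a, ∑ b, (wMat g σ x a b - wMat g σ y a b) ^ 2)
        ≤ ∑ a, ∑ b, (if g a b ≠ 0 then (G * Lh) ^ 2 * 2 * (d a ^ 2 + d b ^ 2) else 0) :=
      Finset.sum_le_sum fun a _ => Finset.sum_le_sum fun b _ => hterm a b
    have step2 : (∑ a, ∑ b, (if g a b ≠ 0 then (G * Lh) ^ 2 * 2 * (d a ^ 2 + d b ^ 2) else 0))
        = (G * Lh) ^ 2 * 2 * ((∑ a, ∑ b, if g a b ≠ 0 then d a ^ 2 else 0)
            + (∑ a, ∑ b, if g a b ≠ 0 then d b ^ 2 else 0)) := by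
      simp only [mul_add, Finset.mul_sum, ← Finset.sum_add_distrib]
      apply Finset.sum_congr rfl
      intro a _
      apply Finset.sum_congr rfl
      intro b _
      by_cases h : g a b ≠ 0 <;> simp [h] <;> ring
    have step3 : ((∑ a, ∑ b, if g a b ≠ 0 then d a ^ 2 else 0)
            + (∑ a, ∑ b, if g a b ≠ 0 then d b ^ 2 else 0))
        ≤ N * (∑ a, d a ^ 2) + N * (∑ a, d a ^ 2) := by
      apply add_le_add _ hsum2
      rw [Finset.mul_sum]
      exact Finset.sum_le_sum fun a _ => hsum1 a
    have hsq : Real.sqrt N ^ 2 = (N : ℝ) := Real.sq_sqrt (Nat.cast_nonneg N)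
    calc (∑ a, ∑ b, (wMat g σ x a b - wMat g σ y a b) ^ 2)
        ≤ (G * Lh) ^ 2 * 2 * ((∑ a, ∑ b, if g a b ≠ 0 then d a ^ 2 else 0)
            + (∑ a, ∑ b, if g a b ≠ 0 then d b ^ 2 else 0)) := by rw [← step2]; exact step1
      _ ≤ (G * Lh) ^ 2 * 2 * (N * (∑ a, d a ^ 2) + N * (∑ a, d a ^ 2)) :=
          mul_le_mul_of_nonneg_left step3 (by positivity)
      _ = (2 * G * Lh * Real.sqrt N * ‖x - y‖) ^ 2 := by
          have he : (2 * G * Lh * Real.sqrt N * ‖x - y‖) ^ 2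
              = 4 * (G * Lh) ^ 2 * (Real.sqrt N ^ 2) * (‖x - y‖ ^ 2) := by ring
          rw [he, hsq, hnorm]
          ring
  have hR : 0 ≤ 2 * G * Lh * Real.sqrt N * ‖x - y‖ := by positivity
  calc Real.sqrt (∑ a, ∑ b, (wMat g σ x a b - wMat g σ y a b) ^ 2)
      ≤ Real.sqrt ((2 * G * Lh * Real.sqrt N * ‖x - y‖) ^ 2) := Real.sqrt_le_sqrt hmain
    _ = 2 * G * Lh * Real.sqrt N * ‖x - y‖ := Real.sqrt_sq hR
end

section
/- Lipschitz continuity of the graph Laplacian in the underlying signal: There exists a constant 𝓗 > 0, depending only on n, g and σ, such that for all x, y : Fin n → ℝ the graph Laplacians satisfy ‖Δ_x − Δ_y‖ ≤ 𝓗·‖x − y‖₂ in the operator norm induced by the Euclidean norm; consequently, for every z : Fin n → ℝ, ‖Δ_x z − Δ_y z‖₂ ≤ 𝓗·‖z‖₂·‖x − y‖₂. -/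
open scoped BigOperators RealInnerProductSpace Classical
open ContinuousLinearMap Filter

open NNReal

/-! Writing `Δ_x = ∑ a b, W_x(a,b) • (eₐeₐᵀ - eₐe_bᵀ)` exhibits the Laplacian as a fixed finite
combination of operators with coefficients `x ↦ g(a,b) exp(-(x a - x b)² / σ)`. These are
Lipschitz because the derivative `-(2/σ) t exp(-t²/σ)` of the Gaussian is bounded by `2/√σ`, and a
finite sum of Lipschitz maps is Lipschitz. -/

theorem LipschitzWith.sum {ι α E : Type*} [PseudoEMetricSpace α] [SeminormedAddCommGroup E]
    (s : Finset ι) {f : ι → α → E} {K : ι → ℝ≥0} (hf : ∀ i ∈ s, LipschitzWith (K i) (f i)) :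
    LipschitzWith (∑ i ∈ s, K i) fun x => ∑ i ∈ s, f i x := by
  induction s using Finset.cons_induction with
  | empty => simpa using LipschitzWith.const (0 : E)
  | cons i s _ ih =>
    simp only [Finset.sum_cons]
    exact (hf i (s.mem_cons_self i)).add (ih fun j hj => hf j (Finset.mem_cons_of_mem hj))

theorem LipschitzWith.smul_const {α 𝕜 E : Type*} [PseudoMetricSpace α] [NormedField 𝕜]
    [SeminormedAddCommGroup E] [NormedSpace 𝕜 E] {f : α → 𝕜} {K : ℝ≥0}
    (hf : LipschitzWith K f) (v : E) : LipschitzWith (K * ‖v‖₊) fun x => f x • v := by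
  refine LipschitzWith.of_dist_le_mul fun x y => ?_
  rw [dist_eq_norm, ← sub_smul, norm_smul, ← dist_eq_norm, NNReal.coe_mul, coe_nnnorm,
    mul_right_comm]
  gcongr
  exact hf.dist_le_mul x y

theorem lipschitzWith_exp_neg_sq_div {σ : ℝ} (hσ : 0 < σ) :
    LipschitzWith (2 / √σ).toNNReal fun t : ℝ => Real.exp (-t ^ 2 / σ) := by
  refine lipschitzWith_of_nnnorm_deriv_le (by fun_prop) fun t => ?_
  have hderiv : HasDerivAt (fun t : ℝ => Real.exp (-t ^ 2 / σ))
      (-(2 / σ) * Real.mulExpNegMulSq σ⁻¹ t) t := by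
    convert ((hasDerivAt_pow 2 t).neg.div_const σ).exp using 1
    · rfl
    · simp only [Real.mulExpNegMulSq, Pi.neg_apply]
      ring_nf
  rw [hderiv.deriv, ← NNReal.coe_le_coe, coe_nnnorm, norm_mul, norm_neg, Real.norm_eq_abs,
    Real.norm_eq_abs, abs_of_pos (by positivity), Real.coe_toNNReal _ (by positivity)]
  calc 2 / σ * |Real.mulExpNegMulSq σ⁻¹ t| ≤ 2 / σ * (√σ⁻¹)⁻¹ := by
        gcongr; exact Real.abs_mulExpNegMulSq_le (inv_pos.mpr hσ)
    _ = 2 / √σ := by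
        rw [Real.sqrt_inv, inv_inv]
        field_simp
        exact Real.sq_sqrt hσ.le

theorem lipschitzWith_apply_sub_apply {ι : Type*} [Fintype ι] (a b : ι) :
    LipschitzWith 2 fun x : EuclideanSpace ℝ ι => x a - x b := by
  have hproj (c : ι) : LipschitzWith 1 fun x : EuclideanSpace ℝ ι => x c := by
    have := (LipschitzWith.eval c).comp (PiLp.lipschitzWith_ofLp 2 fun _ : ι => ℝ)
    rw [mul_one] at this
    exact this
  simpa [one_add_one_eq_two] using (hproj a).sub (hproj b)

theorem lapMat_eq_sum {n : ℕ} (g : Fin n → Fin n → ℝ) (σ : ℝ) (x : EuclideanSpace ℝ (Fin n)) :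
    lapMat g σ x = ∑ a, ∑ b, wMat g σ x a b • (Matrix.single a a 1 - Matrix.single a b 1) := by
  ext i j
  simp [lapMat, degFun, Matrix.sum_apply, Matrix.single_apply, Matrix.diagonal_apply, mul_sub,
    Finset.sum_sub_distrib, ite_and, Finset.sum_ite_eq']

theorem lapCLM_eq_sum {n : ℕ} (g : Fin n → Fin n → ℝ) (σ : ℝ) (x : EuclideanSpace ℝ (Fin n)) :
    lapCLM g σ x = ∑ a, ∑ b, wMat g σ x a b •
      Matrix.toEuclideanCLM (𝕜 := ℝ) (Matrix.single a a 1 - Matrix.single a b 1) := by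
  change Matrix.toEuclideanCLM (𝕜 := ℝ) (lapMat g σ x) = _
  simp only [lapMat_eq_sum, map_sum, map_smul]

theorem lipschitzWith_lapCLM {n : ℕ} (g : Fin n → Fin n → ℝ) {σ : ℝ} (hσ : 0 < σ) :
    ∃ K, LipschitzWith K (lapCLM g σ) := by
  have hw (a b : Fin n) : LipschitzWith (‖g a b‖₊ * ((2 / √σ).toNNReal * 2))
      fun x => wMat g σ x a b :=
    (lipschitzWith_smul (g a b)).comp
      ((lipschitzWith_exp_neg_sq_div hσ).comp (lipschitzWith_apply_sub_apply a b))
  have hsum := LipschitzWith.sum Finset.univ fun a _ => LipschitzWith.sum Finset.univ fun b _ =>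
    (hw a b).smul_const
      (Matrix.toEuclideanCLM (𝕜 := ℝ) (n := Fin n) (Matrix.single a a 1 - Matrix.single a b 1))
  exact ⟨_, by rwa [funext (lapCLM_eq_sum g σ)]⟩

theorem stmt10_general (n : ℕ) (g : Fin n → Fin n → ℝ) (σ : ℝ) (hσ : 0 < σ) :
    ∃ H : ℝ, 0 < H ∧
      (∀ x y : EuclideanSpace ℝ (Fin n), ‖lapCLM g σ x - lapCLM g σ y‖ ≤ H * ‖x - y‖) ∧
      (∀ x y z : EuclideanSpace ℝ (Fin n),
        ‖lapCLM g σ x z - lapCLM g σ y z‖ ≤ H * ‖z‖ * ‖x - y‖) := by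
  obtain ⟨K, hK⟩ := lipschitzWith_lapCLM g hσ
  have hlip (x y : EuclideanSpace ℝ (Fin n)) :
      ‖lapCLM g σ x - lapCLM g σ y‖ ≤ (K + 1) * ‖x - y‖ :=
    calc ‖lapCLM g σ x - lapCLM g σ y‖ ≤ K * ‖x - y‖ := by
          simpa only [dist_eq_norm] using hK.dist_le_mul x y
      _ ≤ (K + 1) * ‖x - y‖ := by gcongr; linarith
  refine ⟨K + 1, by positivity, hlip, fun x y z => ?_⟩
  calc ‖lapCLM g σ x z - lapCLM g σ y z‖ = ‖(lapCLM g σ x - lapCLM g σ y) z‖ := rfl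
    _ ≤ ‖lapCLM g σ x - lapCLM g σ y‖ * ‖z‖ := le_opNorm _ z
    _ ≤ (K + 1) * ‖x - y‖ * ‖z‖ := by gcongr; exact hlip x y
    _ = (K + 1) * ‖z‖ * ‖x - y‖ := by ring

/-- Lipschitz continuity of the graph Laplacian in the underlying signal. -/
theorem stmt10 (n : ℕ) (g : Fin n → Fin n → ℝ) (σ : ℝ) (hσ : 0 < σ)
    (hgsymm : ∀ a b, g a b = g b a) (hgnn : ∀ a b, 0 ≤ g a b) (hgdiag : ∀ a, g a a = 0) :
    ∃ H : ℝ, 0 < H ∧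
      (∀ x y : EuclideanSpace ℝ (Fin n), ‖lapCLM g σ x - lapCLM g σ y‖ ≤ H * ‖x - y‖) ∧
      (∀ x y z : EuclideanSpace ℝ (Fin n),
        ‖lapCLM g σ x z - lapCLM g σ y z‖ ≤ H * ‖z‖ * ‖x - y‖) :=
  stmt10_general n g σ hσ
end

section
/- Stability of the IRMGL iterates with respect to data perturbations: Let (δ_j) be a sequence of positive reals with δ_j → 0, let v_j ∈ V satisfy ‖v_j − v‖ ≤ δ_j, and let initial points u₀^{(j)} ∈ U satisfy u₀^{(j)} → u₀ as j → ∞. Let (u_k^{(j)})_k denote the IRMGL iterates with data v_j started at u₀^{(j)}, and let (u_k)_k denote the IRMGL iterates with exact data v started at u₀. Then for every fixed k ≥ 0, u_k^{(j)} → u_k as j → ∞. -/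
open scoped BigOperators RealInnerProductSpace Classical
open ContinuousLinearMap Filter

/-!
The step sizes `α_w(u)` and `β_w(u)` are discontinuous, but only where the direction they
multiply (`A*(Au - w)`, resp. `Δ_u u`) vanishes; since they are bounded, the products are
nevertheless continuous there. Hence one IRMGL step is jointly continuous in the data and the
current iterate, and so is the `k`-th iterate, by induction on `k`.
-/

open Topology

theorem ContinuousAt.smul_of_norm_le {X 𝕜 E : Type*} [TopologicalSpace X] [NormedField 𝕜]
    [NormedAddCommGroup E] [NormedSpace 𝕜 E] {f : X → 𝕜} {F : X → E} {x : X} {C : ℝ}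
    (hfC : ∀ y, ‖f y‖ ≤ C) (hF : ContinuousAt F x) (hf : F x ≠ 0 → ContinuousAt f x) :
    ContinuousAt (fun y => f y • F y) x := by
  by_cases hx : F x = 0
  · have hF0 : Tendsto F (𝓝 x) (𝓝 0) := hx ▸ hF
    simpa only [ContinuousAt, hx, smul_zero] using
      (isBoundedUnder_of ⟨C, hfC⟩).smul_tendsto_zero hF0
  · exact (hf hx).smul hF

section IRMGL

variable {n m : ℕ}

theorem continuous_wMat (g : Fin n → Fin n → ℝ) (σ : ℝ) : Continuous (wMat g σ) :=
  continuous_matrix fun a b => by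
    simp only [wMat, Matrix.of_apply]
    fun_prop

theorem continuous_lapMat (g : Fin n → Fin n → ℝ) (σ : ℝ) : Continuous (lapMat g σ) := by
  have hdeg : Continuous (degFun g σ) :=
    continuous_pi fun a => continuous_finsetSum _ fun b _ =>
      (continuous_wMat g σ).matrix_elem a b
  exact hdeg.matrix_diagonal.sub (continuous_wMat g σ)

theorem continuous_lapCLM_apply_self (g : Fin n → Fin n → ℝ) (σ : ℝ) :
    Continuous fun u : EuclideanSpace ℝ (Fin n) => lapCLM g σ u u :=
  (PiLp.continuous_toLp 2 _).comp
    ((continuous_lapMat g σ).matrix_mulVec (PiLp.continuous_ofLp 2 _))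

variable (A : EuclideanSpace ℝ (Fin n) →L[ℝ] EuclideanSpace ℝ (Fin m))

theorem abs_alphaStep_le {η₀ η₁ : ℝ} (hη₀ : 0 ≤ η₀) (hη₁ : 0 ≤ η₁)
    (w : EuclideanSpace ℝ (Fin m)) (u : EuclideanSpace ℝ (Fin n)) :
    |alphaStep A η₀ η₁ w u| ≤ η₁ := by
  unfold alphaStep
  split_ifs
  · rw [abs_of_nonneg (le_min (by positivity) hη₁)]
    exact min_le_right _ _
  · rw [abs_of_nonneg hη₁]

theorem abs_betaStep_le (g : Fin n → Fin n → ℝ) (σ : ℝ) {ν₀ ν₁ ν₂ : ℝ}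
    (hν₀ : 0 ≤ ν₀) (hν₁ : 0 ≤ ν₁) (hν₂ : 0 ≤ ν₂)
    (w : EuclideanSpace ℝ (Fin m)) (u : EuclideanSpace ℝ (Fin n)) :
    |betaStep g σ A ν₀ ν₁ ν₂ w u| ≤ ν₂ := by
  unfold betaStep
  split_ifs
  · rw [abs_of_nonneg (le_min (le_min (by positivity) (by positivity)) hν₂)]
    exact min_le_right _ _
  · rwa [abs_zero]

theorem continuousAt_alphaStep (η₀ η₁ : ℝ)
    {w : EuclideanSpace ℝ (Fin m)} {u : EuclideanSpace ℝ (Fin n)}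
    (h : adjoint A (A u - w) ≠ 0) :
    ContinuousAt (Function.uncurry (alphaStep A η₀ η₁)) (w, u) := by
  have hres : Continuous fun p : EuclideanSpace ℝ (Fin m) × EuclideanSpace ℝ (Fin n) =>
      adjoint A (A p.2 - p.1) := by
    fun_prop
  have hformula : ContinuousAt (fun p : EuclideanSpace ℝ (Fin m) × EuclideanSpace ℝ (Fin n) =>
      min (η₀ * ‖A p.2 - p.1‖ ^ 2 / ‖adjoint A (A p.2 - p.1)‖ ^ 2) η₁) (w, u) :=
    Tendsto.min (ContinuousAt.div (by fun_prop) (by fun_prop) (by simpa using h))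
      continuousAt_const
  refine hformula.congr ?_
  filter_upwards [hres.continuousAt.eventually_ne h] with p hp
  simp only [Function.uncurry_def, alphaStep, if_pos hp]

theorem continuousAt_betaStep (g : Fin n → Fin n → ℝ) (σ : ℝ) (ν₀ ν₁ ν₂ : ℝ)
    {w : EuclideanSpace ℝ (Fin m)} {u : EuclideanSpace ℝ (Fin n)}
    (h : lapCLM g σ u u ≠ 0) :
    ContinuousAt (Function.uncurry (betaStep g σ A ν₀ ν₁ ν₂)) (w, u) := by
  have hlap : Continuous fun p : EuclideanSpace ℝ (Fin m) × EuclideanSpace ℝ (Fin n) =>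
      lapCLM g σ p.2 p.2 :=
    (continuous_lapCLM_apply_self g σ).comp continuous_snd
  have hnorm : ‖lapCLM g σ u u‖ ≠ 0 := norm_ne_zero_iff.mpr h
  have hformula : ContinuousAt (fun p : EuclideanSpace ℝ (Fin m) × EuclideanSpace ℝ (Fin n) =>
      min (min (ν₀ * ‖A p.2 - p.1‖ ^ 2 / ‖lapCLM g σ p.2 p.2‖)
        (ν₁ / ‖lapCLM g σ p.2 p.2‖)) ν₂) (w, u) :=
    Tendsto.min
      (Tendsto.min (ContinuousAt.div (by fun_prop) hlap.norm.continuousAt hnorm)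
        (continuousAt_const.div hlap.norm.continuousAt hnorm))
      continuousAt_const
  refine hformula.congr ?_
  filter_upwards [hlap.continuousAt.eventually_ne h] with p hp
  simp only [Function.uncurry_def, betaStep, if_pos hp]

variable (g : Fin n → Fin n → ℝ) (σ : ℝ) {η₀ η₁ ν₀ ν₁ ν₂ : ℝ}

theorem continuous_irmglStep
    (hη₀ : 0 ≤ η₀) (hη₁ : 0 ≤ η₁) (hν₀ : 0 ≤ ν₀) (hν₁ : 0 ≤ ν₁) (hν₂ : 0 ≤ ν₂) :
    Continuous (Function.uncurry (irmglStep g σ A η₀ η₁ ν₀ ν₁ ν₂)) := by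
  refine continuous_iff_continuousAt.mpr fun ⟨w, u⟩ => ?_
  have hα : ContinuousAt (fun p : EuclideanSpace ℝ (Fin m) × EuclideanSpace ℝ (Fin n) =>
      alphaStep A η₀ η₁ p.1 p.2 • adjoint A (A p.2 - p.1)) (w, u) :=
    ContinuousAt.smul_of_norm_le (fun p => abs_alphaStep_le A hη₀ hη₁ p.1 p.2)
      (by fun_prop) (continuousAt_alphaStep A η₀ η₁)
  have hβ : ContinuousAt (fun p : EuclideanSpace ℝ (Fin m) × EuclideanSpace ℝ (Fin n) =>
      betaStep g σ A ν₀ ν₁ ν₂ p.1 p.2 • lapCLM g σ p.2 p.2) (w, u) :=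
    ContinuousAt.smul_of_norm_le (fun p => abs_betaStep_le A g σ hν₀ hν₁ hν₂ p.1 p.2)
      ((continuous_lapCLM_apply_self g σ).comp continuous_snd).continuousAt
      (continuousAt_betaStep A g σ ν₀ ν₁ ν₂)
  exact (continuousAt_snd.sub hα).sub hβ

theorem continuous_irmglSeq
    (hη₀ : 0 ≤ η₀) (hη₁ : 0 ≤ η₁) (hν₀ : 0 ≤ ν₀) (hν₁ : 0 ≤ ν₁) (hν₂ : 0 ≤ ν₂) (k : ℕ) :
    Continuous fun p : EuclideanSpace ℝ (Fin m) × EuclideanSpace ℝ (Fin n) =>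
      irmglSeq g σ A η₀ η₁ ν₀ ν₁ ν₂ p.1 p.2 k := by
  induction k with
  | zero => exact continuous_snd
  | succ k ih =>
    exact (continuous_irmglStep A g σ hη₀ hη₁ hν₀ hν₁ hν₂).comp (continuous_fst.prodMk ih)

end IRMGL

theorem stmt11_general (n m : ℕ) (g : Fin n → Fin n → ℝ) (σ : ℝ)
    (A : EuclideanSpace ℝ (Fin n) →L[ℝ] EuclideanSpace ℝ (Fin m))
    (η₀ η₁ ν₀ ν₁ ν₂ : ℝ)
    (hη₀ : 0 < η₀) (hη₁ : 0 < η₁) (hν₀ : 0 < ν₀) (hν₁ : 0 < ν₁) (hν₂ : 0 < ν₂)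
    (v : EuclideanSpace ℝ (Fin m))
    (δ : ℕ → ℝ) (hδ : Tendsto δ atTop (nhds 0))
    (vj : ℕ → EuclideanSpace ℝ (Fin m)) (hvj : ∀ j, ‖vj j - v‖ ≤ δ j)
    (u₀ : EuclideanSpace ℝ (Fin n)) (u₀j : ℕ → EuclideanSpace ℝ (Fin n))
    (hu₀j : Tendsto u₀j atTop (nhds u₀)) :
    ∀ k : ℕ,
      Tendsto (fun j => irmglSeq g σ A η₀ η₁ ν₀ ν₁ ν₂ (vj j) (u₀j j) k) atTop
        (nhds (irmglSeq g σ A η₀ η₁ ν₀ ν₁ ν₂ v u₀ k)) := by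
  have hv : Tendsto vj atTop (𝓝 v) :=
    tendsto_iff_norm_sub_tendsto_zero.mpr (squeeze_zero (fun _ => norm_nonneg _) hvj hδ)
  intro k
  exact ((continuous_irmglSeq A g σ hη₀.le hη₁.le hν₀.le hν₁.le hν₂.le k).tendsto
    (v, u₀)).comp (hv.prodMk_nhds hu₀j)

/-- Stability of the IRMGL iterates with respect to data perturbations. -/
theorem stmt11 (n m : ℕ) (g : Fin n → Fin n → ℝ) (σ : ℝ) (hσ : 0 < σ)
    (hgsymm : ∀ a b, g a b = g b a) (hgnn : ∀ a b, 0 ≤ g a b) (hgdiag : ∀ a, g a a = 0)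
    (A : EuclideanSpace ℝ (Fin n) →L[ℝ] EuclideanSpace ℝ (Fin m))
    (η₀ η₁ ν₀ ν₁ ν₂ : ℝ)
    (hη₀ : 0 < η₀) (hη₁ : 0 < η₁) (hν₀ : 0 < ν₀) (hν₁ : 0 < ν₁) (hν₂ : 0 < ν₂)
    (udag : EuclideanSpace ℝ (Fin n)) (v : EuclideanSpace ℝ (Fin m)) (hsol : A udag = v)
    (δ : ℕ → ℝ) (hδpos : ∀ j, 0 < δ j) (hδ : Tendsto δ atTop (nhds 0))
    (vj : ℕ → EuclideanSpace ℝ (Fin m)) (hvj : ∀ j, ‖vj j - v‖ ≤ δ j)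
    (u₀ : EuclideanSpace ℝ (Fin n)) (u₀j : ℕ → EuclideanSpace ℝ (Fin n))
    (hu₀j : Tendsto u₀j atTop (nhds u₀)) :
    ∀ k : ℕ,
      Tendsto (fun j => irmglSeq g σ A η₀ η₁ ν₀ ν₁ ν₂ (vj j) (u₀j j) k) atTop
        (nhds (irmglSeq g σ A η₀ η₁ ν₀ ν₁ ν₂ v u₀ k)) :=
  stmt11_general n m g σ A η₀ η₁ ν₀ ν₁ ν₂ hη₀ hη₁ hν₀ hν₁ hν₂ v δ hδ vj hvj u₀ u₀j hu₀j
end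

section
/- Tikhonov reconstruction error bound: Let A : U →L[ℝ] V be a continuous linear map with adjoint A*, and suppose A*A is boundedly invertible with ⟨A*A u, u⟩ ≥ σ_min²·‖u‖² for all u ∈ U, where σ_min > 0. Let u† ∈ U and v = Au†. Then for every λ > 0 the Tikhonov reconstruction Ψ_Tik(v) := (A*A + λI)⁻¹ A* v satisfies ‖Ψ_Tik(v) − u†‖ ≤ (λ/(σ_min² + λ))·‖u†‖. -/
open scoped RealInnerProductSpace
open ContinuousLinearMap

/-- Tikhonov reconstruction error bound.  `uTik` is the Tikhonov
reconstruction `(A*A + λI)⁻¹ A* v` of the exact data `v = A udag`, characterized as the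
unique solution of the normal equation `(A*A + λI) uTik = A* v`. -/
theorem stmt14 (n m : ℕ)
    (A : EuclideanSpace ℝ (Fin n) →L[ℝ] EuclideanSpace ℝ (Fin m))
    (σmin : ℝ) (hσmin : 0 < σmin)
    (hcoer : ∀ u : EuclideanSpace ℝ (Fin n), σmin ^ 2 * ‖u‖ ^ 2 ≤ ⟪adjoint A (A u), u⟫)
    (lam : ℝ) (hlam : 0 < lam)
    (udag : EuclideanSpace ℝ (Fin n)) (v : EuclideanSpace ℝ (Fin m)) (hv : v = A udag)
    (uTik : EuclideanSpace ℝ (Fin n))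
    (hTik : (adjoint A ∘L A + lam • ContinuousLinearMap.id ℝ (EuclideanSpace ℝ (Fin n)))
        uTik = adjoint A v) :
    ‖uTik - udag‖ ≤ lam / (σmin ^ 2 + lam) * ‖udag‖ := by
  set e := uTik - udag with he
  have hpos : 0 < σmin ^ 2 + lam := by positivity
  -- key identity: (A*A) e + lam • e = - lam • udag
  have hkey : adjoint A (A e) + lam • e = -(lam • udag) := by
    have h1 : adjoint A (A uTik) + lam • uTik = adjoint A (A udag) := by
      simpa [hv, ContinuousLinearMap.add_apply, ContinuousLinearMap.smul_apply] using hTik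
    have : adjoint A (A e) + lam • e
        = (adjoint A (A uTik) + lam • uTik) - (adjoint A (A udag) + lam • udag) := by
      simp [he, map_sub, smul_sub]
      abel
    rw [this, h1]
    abel
  -- inner product with e
  have hinner : ⟪adjoint A (A e), e⟫ + lam * ‖e‖ ^ 2 = -(lam * ⟪udag, e⟫) := by
    have h := congrArg (fun x => ⟪x, e⟫) hkey
    simp only [inner_add_left, real_inner_smul_left, inner_neg_left,
      real_inner_self_eq_norm_sq] at h
    exact h
  have hlow : (σmin ^ 2 + lam) * ‖e‖ ^ 2 ≤ ⟪adjoint A (A e), e⟫ + lam * ‖e‖ ^ 2 := by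
    have := hcoer e
    nlinarith
  have hup : -(lam * ⟪udag, e⟫) ≤ lam * (‖udag‖ * ‖e‖) := by
    have h1 : -(‖udag‖ * ‖e‖) ≤ ⟪udag, e⟫ := neg_le_of_abs_le (abs_real_inner_le_norm _ _)
    nlinarith
  have hmain : (σmin ^ 2 + lam) * ‖e‖ ^ 2 ≤ lam * (‖udag‖ * ‖e‖) := by
    rw [hinner] at hlow; linarith
  rcases eq_or_lt_of_le (norm_nonneg e) with h0 | h0
  · rw [← h0]; positivity
  · rw [div_mul_eq_mul_div, le_div_iff₀ hpos]
    nlinarith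
end

section
/- Uniform resolvent bound for Tikhonov regularization: Let A : U →L[ℝ] V be a continuous linear map with adjoint A*, and let λ > 0. Then the operator (A*A + λI)⁻¹ A* : V → U satisfies ‖(A*A + λI)⁻¹ A*‖ ≤ 1/(2√λ) in the operator norm. -/
open scoped RealInnerProductSpace
open ContinuousLinearMap

/-- Uniform resolvent bound for Tikhonov regularization.  If
`(A*A + λI) u = A* w`, i.e. `u = (A*A + λI)⁻¹ A* w`, then `‖u‖ ≤ ‖w‖/(2√λ)`; this is the
operator-norm bound `‖(A*A + λI)⁻¹ A*‖ ≤ 1/(2√λ)`. -/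
theorem stmt15 (n m : ℕ)
    (A : EuclideanSpace ℝ (Fin n) →L[ℝ] EuclideanSpace ℝ (Fin m))
    (lam : ℝ) (hlam : 0 < lam)
    (w : EuclideanSpace ℝ (Fin m)) (u : EuclideanSpace ℝ (Fin n))
    (hu : (adjoint A ∘L A + lam • ContinuousLinearMap.id ℝ (EuclideanSpace ℝ (Fin n))) u
        = adjoint A w) :
    ‖u‖ ≤ 1 / (2 * Real.sqrt lam) * ‖w‖ := by
  have key : ‖A u‖ ^ 2 + lam * ‖u‖ ^ 2 = ⟪A u, w⟫ := by
    have h1 : ⟪(adjoint A ∘L A + lam • ContinuousLinearMap.id ℝ (EuclideanSpace ℝ (Fin n))) u, u⟫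
        = ⟪adjoint A w, u⟫ := by rw [hu]
    simp only [ContinuousLinearMap.add_apply, ContinuousLinearMap.comp_apply,
      ContinuousLinearMap.smul_apply, ContinuousLinearMap.id_apply, inner_add_left,
      real_inner_smul_left, ContinuousLinearMap.adjoint_inner_left] at h1
    simp only [real_inner_self_eq_norm_sq] at h1
    rw [real_inner_comm]
    exact h1
  have hAM : ⟪A u, w⟫ ≤ ‖A u‖ ^ 2 + ‖w‖ ^ 2 / 4 := by
    have h2 := real_inner_le_norm (A u) w
    nlinarith [sq_nonneg (‖A u‖ - ‖w‖ / 2)]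
  have hmain : lam * ‖u‖ ^ 2 ≤ ‖w‖ ^ 2 / 4 := by nlinarith
  have hs : 0 < Real.sqrt lam := Real.sqrt_pos.mpr hlam
  rw [← Real.sqrt_sq (norm_nonneg u), show (1 : ℝ) / (2 * Real.sqrt lam) * ‖w‖
      = Real.sqrt ((1 / (2 * Real.sqrt lam) * ‖w‖) ^ 2) from
      (Real.sqrt_sq (by positivity)).symm]
  apply Real.sqrt_le_sqrt
  have hsq : Real.sqrt lam ^ 2 = lam := Real.sq_sqrt hlam.le
  rw [mul_pow, div_pow, one_pow, mul_pow, hsq]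
  rw [div_mul_eq_mul_div, le_div_iff₀ (by positivity)]
  nlinarith
end

section
/- Quantitative stability of the Tikhonov operator in the regularization parameter: Let A : U →L[ℝ] V be a continuous linear map with adjoint A*, and let λ, μ > 0. Then for every w ∈ V, ‖((A*A + μI)⁻¹ − (A*A + λI)⁻¹) A* w‖ ≤ (|λ − μ|/(2μ√λ))·‖w‖. -/
open scoped RealInnerProductSpace
open ContinuousLinearMap
set_option maxHeartbeats 1000000

/-- Quantitative stability of the Tikhonov operator in the regularization
parameter.  With `u₁ = (A*A + μI)⁻¹ A* w` and `u₂ = (A*A + λI)⁻¹ A* w`, characterized by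
the normal equations, one has `‖u₁ − u₂‖ ≤ (|λ − μ|/(2μ√λ))·‖w‖`. -/
theorem stmt16 (n m : ℕ)
    (A : EuclideanSpace ℝ (Fin n) →L[ℝ] EuclideanSpace ℝ (Fin m))
    (lam mu : ℝ) (hlam : 0 < lam) (hmu : 0 < mu)
    (w : EuclideanSpace ℝ (Fin m)) (u₁ u₂ : EuclideanSpace ℝ (Fin n))
    (hu₁ : (adjoint A ∘L A + mu • ContinuousLinearMap.id ℝ (EuclideanSpace ℝ (Fin n))) u₁
        = adjoint A w)
    (hu₂ : (adjoint A ∘L A + lam • ContinuousLinearMap.id ℝ (EuclideanSpace ℝ (Fin n))) u₂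
        = adjoint A w) :
    ‖u₁ - u₂‖ ≤ |lam - mu| / (2 * mu * Real.sqrt lam) * ‖w‖ := by
  simp only [ContinuousLinearMap.add_apply, ContinuousLinearMap.comp_apply,
    ContinuousLinearMap.smul_apply, ContinuousLinearMap.id_apply] at hu₁ hu₂
  obtain ⟨d, hd⟩ : ∃ d, d = u₁ - u₂ := ⟨_, rfl⟩
  rw [← hd]
  have key : adjoint A (A d) + mu • d = (lam - mu) • u₂ := by
    have h := sub_eq_zero.mpr (hu₁.trans hu₂.symm)
    have : adjoint A (A u₁) - adjoint A (A u₂) = adjoint A (A d) := by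
      rw [hd, map_sub, map_sub]
    rw [hd]
    rw [show adjoint A (A (u₁ - u₂)) = adjoint A (A u₁) - adjoint A (A u₂) by
      rw [map_sub, map_sub]]
    have : adjoint A (A u₁) - adjoint A (A u₂) = lam • u₂ - mu • u₁ := by
      have := hu₁.trans hu₂.symm
      linear_combination (norm := module) this
    rw [this]
    module
  -- first inequality: mu ‖d‖² ≤ |lam - mu| ‖u₂‖ ‖d‖
  have h1 : mu * ‖d‖ ^ 2 ≤ |lam - mu| * ‖u₂‖ * ‖d‖ := by
    have e : ⟪adjoint A (A d) + mu • d, d⟫ = ⟪(lam - mu) • u₂, d⟫ := by rw [key]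
    rw [inner_add_left, ContinuousLinearMap.adjoint_inner_left, real_inner_smul_left,
      real_inner_smul_left] at e
    simp only [real_inner_self_eq_norm_sq] at e
    have hAd : (0:ℝ) ≤ ⟪A d, A d⟫ := real_inner_self_nonneg
    have hcs : ⟪u₂, d⟫ ≤ ‖u₂‖ * ‖d‖ := real_inner_le_norm u₂ d
    have hcs2 : (lam - mu) * ⟪u₂, d⟫ ≤ |lam - mu| * (‖u₂‖ * ‖d‖) := by
      calc (lam - mu) * ⟪u₂, d⟫ ≤ |(lam - mu) * ⟪u₂, d⟫| := le_abs_self _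
        _ = |lam - mu| * |⟪u₂, d⟫| := abs_mul _ _
        _ ≤ |lam - mu| * (‖u₂‖ * ‖d‖) := by
            apply mul_le_mul_of_nonneg_left _ (abs_nonneg _)
            exact (abs_real_inner_le_norm u₂ d)
    nlinarith [sq_nonneg (‖A d‖)]
  -- second: ‖A u₂‖² + lam ‖u₂‖² ≤ ‖w‖ ‖A u₂‖
  have h2 : ‖A u₂‖ ^ 2 + lam * ‖u₂‖ ^ 2 ≤ ‖w‖ * ‖A u₂‖ := by
    have e : ⟪adjoint A (A u₂) + lam • u₂, u₂⟫ = ⟪adjoint A w, u₂⟫ := by rw [hu₂]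
    rw [inner_add_left, ContinuousLinearMap.adjoint_inner_left,
      ContinuousLinearMap.adjoint_inner_left, real_inner_smul_left,
      real_inner_self_eq_norm_sq, real_inner_self_eq_norm_sq] at e
    have hcs : ⟪w, A u₂⟫ ≤ ‖w‖ * ‖A u₂‖ := real_inner_le_norm _ _
    nlinarith
  -- from h2 : sqrt lam * ‖u₂‖ ≤ ‖w‖ / 2
  obtain ⟨s, hs⟩ : ∃ s, s = Real.sqrt lam := ⟨_, rfl⟩
  rw [← hs]
  have hs2 : s ^ 2 = lam := hs ▸ Real.sq_sqrt hlam.le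
  have hspos : 0 < s := hs ▸ Real.sqrt_pos.mpr hlam
  have h3 : s * ‖u₂‖ ≤ ‖w‖ / 2 := by
    have hsq : (s * ‖u₂‖) ^ 2 ≤ (‖w‖ / 2) ^ 2 := by
      have := sq_nonneg (‖A u₂‖ - ‖w‖ / 2)
      nlinarith [sq_nonneg (‖A u₂‖ - ‖w‖ / 2)]
    have := le_of_pow_le_pow_left₀ (two_ne_zero) (by positivity : (0:ℝ) ≤ ‖w‖ / 2) hsq
    exact this
  rw [div_mul_eq_mul_div, le_div_iff₀ (by positivity)]
  rcases eq_or_lt_of_le (norm_nonneg d) with hdz | hdz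
  · have h0 : ‖d‖ = 0 := hdz.symm
    rw [h0, zero_mul]
    exact mul_nonneg (abs_nonneg _) (norm_nonneg _)
  · have h1' : mu * ‖d‖ ≤ |lam - mu| * ‖u₂‖ := by nlinarith [h1, hdz]
    have t1 := mul_le_mul_of_nonneg_left h1' hspos.le
    have t2 := mul_le_mul_of_nonneg_left h3 (abs_nonneg (lam - mu))
    nlinarith [t1, t2]
end

section
/- Norm bound on the IRMGL update direction: For any u ∈ U and w ∈ V, the update direction d := α_w(u)·A*(Au − w) + β_w(u)·Δ_u u satisfies ‖d‖² ≤ 2(η₀η₁ + ν₀ν₁)·‖Au − w‖². -/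
open scoped BigOperators RealInnerProductSpace Classical
open ContinuousLinearMap Filter

/-- Norm bound on the IRMGL update direction. -/
theorem stmt17 (n m : ℕ) (g : Fin n → Fin n → ℝ) (σ : ℝ) (hσ : 0 < σ)
    (hgsymm : ∀ a b, g a b = g b a) (hgnn : ∀ a b, 0 ≤ g a b) (hgdiag : ∀ a, g a a = 0)
    (A : EuclideanSpace ℝ (Fin n) →L[ℝ] EuclideanSpace ℝ (Fin m))
    (η₀ η₁ ν₀ ν₁ ν₂ : ℝ)
    (hη₀ : 0 < η₀) (hη₁ : 0 < η₁) (hν₀ : 0 < ν₀) (hν₁ : 0 < ν₁) (hν₂ : 0 < ν₂)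
    (u : EuclideanSpace ℝ (Fin n)) (w : EuclideanSpace ℝ (Fin m)) :
    ‖alphaStep A η₀ η₁ w u • adjoint A (A u - w)
        + betaStep g σ A ν₀ ν₁ ν₂ w u • lapCLM g σ u u‖ ^ 2
      ≤ 2 * (η₀ * η₁ + ν₀ * ν₁) * ‖A u - w‖ ^ 2 := by
  set r := A u - w with hr
  set x := adjoint A (A u - w) with hx
  set y := lapCLM g σ u u with hy
  set α := alphaStep A η₀ η₁ w u with hα
  set β := betaStep g σ A ν₀ ν₁ ν₂ w u with hβ
  have h1 : ‖α • x‖ ^ 2 ≤ η₀ * η₁ * ‖r‖ ^ 2 := by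
    by_cases hx0 : x = 0
    · simp [hx0]
      positivity
    · have hxn : (0:ℝ) < ‖x‖ := norm_pos_iff.mpr hx0
      have hαdef : α = min (η₀ * ‖r‖ ^ 2 / ‖x‖ ^ 2) η₁ := by
        rw [hα, alphaStep, if_pos (by rw [← hx]; exact hx0)]
      have ha : α ≤ η₀ * ‖r‖ ^ 2 / ‖x‖ ^ 2 := hαdef ▸ min_le_left _ _
      have hb : α ≤ η₁ := hαdef ▸ min_le_right _ _
      have hα0 : 0 ≤ α := by
        rw [hαdef]
        exact le_min (by positivity) hη₁.le
      have hαα : α * α ≤ (η₀ * ‖r‖ ^ 2 / ‖x‖ ^ 2) * η₁ :=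
        mul_le_mul ha hb hα0 (by positivity)
      have : ‖α • x‖ ^ 2 = α * α * ‖x‖ ^ 2 := by
        rw [norm_smul]; simp [abs_of_nonneg hα0]; ring
      rw [this]
      have hxe : (η₀ * ‖r‖ ^ 2 / ‖x‖ ^ 2) * η₁ * ‖x‖ ^ 2 = η₀ * η₁ * ‖r‖ ^ 2 := by
        field_simp
      calc α * α * ‖x‖ ^ 2 ≤ (η₀ * ‖r‖ ^ 2 / ‖x‖ ^ 2) * η₁ * ‖x‖ ^ 2 :=
            mul_le_mul_of_nonneg_right hαα (by positivity)
        _ = η₀ * η₁ * ‖r‖ ^ 2 := hxe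
  have h2 : ‖β • y‖ ^ 2 ≤ ν₀ * ν₁ * ‖r‖ ^ 2 := by
    by_cases hy0 : y = 0
    · simp [hy0]
      positivity
    · have hyn : (0:ℝ) < ‖y‖ := norm_pos_iff.mpr hy0
      have hβdef : β = min (min (ν₀ * ‖r‖ ^ 2 / ‖y‖) (ν₁ / ‖y‖)) ν₂ := by
        rw [hβ, betaStep, if_pos (by rw [← hy]; exact hy0)]
      have ha : β ≤ ν₀ * ‖r‖ ^ 2 / ‖y‖ :=
        hβdef ▸ le_trans (min_le_left _ _) (min_le_left _ _)
      have hb : β ≤ ν₁ / ‖y‖ :=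
        hβdef ▸ le_trans (min_le_left _ _) (min_le_right _ _)
      have hβ0 : 0 ≤ β := by
        rw [hβdef]
        exact le_min (le_min (by positivity) (by positivity)) hν₂.le
      have hββ : β * β ≤ (ν₀ * ‖r‖ ^ 2 / ‖y‖) * (ν₁ / ‖y‖) :=
        mul_le_mul ha hb hβ0 (by positivity)
      have : ‖β • y‖ ^ 2 = β * β * ‖y‖ ^ 2 := by
        rw [norm_smul]; simp [abs_of_nonneg hβ0]; ring
      rw [this]
      have hye : (ν₀ * ‖r‖ ^ 2 / ‖y‖) * (ν₁ / ‖y‖) * ‖y‖ ^ 2 = ν₀ * ν₁ * ‖r‖ ^ 2 := by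
        field_simp
      calc β * β * ‖y‖ ^ 2 ≤ (ν₀ * ‖r‖ ^ 2 / ‖y‖) * (ν₁ / ‖y‖) * ‖y‖ ^ 2 :=
            mul_le_mul_of_nonneg_right hββ (by positivity)
        _ = ν₀ * ν₁ * ‖r‖ ^ 2 := hye
  have htri : ‖α • x + β • y‖ ≤ ‖α • x‖ + ‖β • y‖ := norm_add_le _ _
  nlinarith [sq_nonneg (‖α • x‖ - ‖β • y‖), norm_nonneg (α • x + β • y),
    norm_nonneg (α • x), norm_nonneg (β • y),
    mul_self_le_mul_self (norm_nonneg (α • x + β • y)) htri]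
end
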